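/- If the diagonal entries (r_{1,1},…,r_{K,1}) of R_1 are exchangeable and A is doubly stochastic (and primitive), then ρ^{AA} ≤ η_A ρ^{GA} − (1 − η_A) E[ log( (1/K) Σ_k r_{k,1} ) ], and consequently ρ^{GA} − ρ^{AA} ≥ (1 − η_A) · E[ log( (1/K) Σ_k r_{k,1} ) − (1/K) Σ_k log r_{k,1} ]. -/

import Mathlib

open MeasureTheory ProbabilityTheory Filter Matrix

noncomputable def Ymat {K : ℕ} (A : Matrix (Fin K) (Fin K) ℝ) (r : ℕ → Fin K → ℝ) (i : ℕ) :
    Matrix (Fin K) (Fin K) ℝ :=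
  ((List.range i).map fun j => Aᵀ * Matrix.diagonal (r (j + 1))).prod

def probVec {K : ℕ} (u : Fin K → ℝ) : Prop := (∀ k, 0 ≤ u k) ∧ ∑ k, u k = 1

noncomputable def klVecE {K : ℕ} (p q : Fin K → ℝ) : ENNReal :=
  if ∀ k, q k = 0 → p k = 0 then ENNReal.ofReal (∑ k, p k * Real.log (p k / q k)) else ⊤

noncomputable def contractionCoeff {K : ℕ} (A : Matrix (Fin K) (Fin K) ℝ) : ENNReal :=
  ⨆ (u : {u : Fin K → ℝ // probVec u}) (v : {v : Fin K → ℝ // probVec v})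
    (_ : (u : Fin K → ℝ) ≠ (v : Fin K → ℝ)),
    klVecE (A.mulVec u) (A.mulVec v) / klVecE (u : Fin K → ℝ) (v : Fin K → ℝ)

/-- real KL sum -/
noncomputable def klR {K : ℕ} (p q : Fin K → ℝ) : ℝ := ∑ k, p k * Real.log (p k / q k)

lemma gibbs {K : ℕ} (p q : Fin K → ℝ) (hp : ∀ k, 0 ≤ p k) (hq : ∀ k, 0 ≤ q k)
    (hg : ∀ k, q k = 0 → p k = 0) :
    (∑ k, p k) - (∑ k, q k) ≤ klR p q := by
  rw [klR, ← Finset.sum_sub_distrib]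
  refine Finset.sum_le_sum fun k _ => ?_
  rcases eq_or_lt_of_le (hp k) with h0 | hpk
  · simp [← h0]; exact hq k
  · have hqk : 0 < q k := lt_of_le_of_ne (hq k) (fun h => by
      have := hg k h.symm; exact hpk.ne' this)
    have hlog : Real.log (q k / p k) ≤ q k / p k - 1 :=
      Real.log_le_sub_one_of_pos (div_pos hqk hpk)
    have hinv : Real.log (p k / q k) = -Real.log (q k / p k) := by
      rw [← Real.log_inv, inv_div]
    rw [hinv]
    have := mul_le_mul_of_nonneg_left hlog (hp k)
    have h2 : p k * (q k / p k - 1) = q k - p k := by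
      field_simp
    nlinarith

lemma klR_nonneg {K : ℕ} (p q : Fin K → ℝ) (hp : ∀ k, 0 ≤ p k) (hq : ∀ k, 0 ≤ q k)
    (hps : ∑ k, p k = 1) (hqs : ∑ k, q k = 1) (hg : ∀ k, q k = 0 → p k = 0) :
    0 ≤ klR p q := by
  have := gibbs p q hp hq hg
  rw [hps, hqs] at this; linarith

lemma logsum {K : ℕ} (a b : Fin K → ℝ) (ha : ∀ k, 0 ≤ a k) (hb : ∀ k, 0 ≤ b k)
    (hg : ∀ k, b k = 0 → a k = 0) :
    (∑ k, a k) * Real.log ((∑ k, a k) / (∑ k, b k)) ≤ klR a b := by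
  rcases eq_or_lt_of_le (Finset.sum_nonneg fun k _ => ha k) with hsa | hsa
  · have hall : ∀ k, a k = 0 := by
      intro k
      have := (Finset.sum_eq_zero_iff_of_nonneg (fun k _ => ha k)).1 hsa.symm
      exact this k (Finset.mem_univ k)
    simp [← hsa, klR, hall]
  · have hsb : 0 < ∑ k, b k := by
      rcases eq_or_lt_of_le (Finset.sum_nonneg fun k _ => hb k) with h | h
      · exfalso
        have hallb : ∀ k, b k = 0 := by
          intro k
          have := (Finset.sum_eq_zero_iff_of_nonneg (fun k _ => hb k)).1 h.symm
          exact this k (Finset.mem_univ k)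
        have : ∀ k, a k = 0 := fun k => hg k (hallb k)
        simp [this] at hsa
      · exact h
    set t : ℝ := (∑ k, a k) / (∑ k, b k) with ht
    have htpos : 0 < t := div_pos hsa hsb
    have key := gibbs a (fun k => b k * t) ha (fun k => mul_nonneg (hb k) htpos.le)
      (fun k h => hg k (by
        rcases mul_eq_zero.1 h with h' | h'
        · exact h'
        · exact absurd h' htpos.ne'))
    have hsumq : ∑ k, b k * t = ∑ k, a k := by
      rw [← Finset.sum_mul, ht]; field_simp
    rw [hsumq, sub_self] at key
    have hterm : ∀ k, a k * Real.log (a k / (b k * t)) =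
        a k * Real.log (a k / b k) - a k * Real.log t := by
      intro k
      rcases eq_or_lt_of_le (ha k) with h0 | hak
      · simp [← h0]
      · have hbk : 0 < b k := lt_of_le_of_ne (hb k) (fun h => hak.ne' (hg k h.symm))
        rw [div_mul_eq_div_div, Real.log_div (by positivity) htpos.ne', mul_sub]
    rw [klR] at key ⊢
    calc (∑ k, a k) * Real.log t = ∑ k, a k * Real.log t := by rw [Finset.sum_mul]
    _ ≤ ∑ k, a k * Real.log (a k / b k) := by
        have : (0:ℝ) ≤ ∑ k, (a k * Real.log (a k / b k) - a k * Real.log t) := by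
          calc (0:ℝ) ≤ ∑ k, a k * Real.log (a k / (b k * t)) := key
          _ = _ := Finset.sum_congr rfl fun k _ => hterm k
        rw [Finset.sum_sub_distrib] at this
        linarith

lemma klR_mulVec_le {K : ℕ} (A : Matrix (Fin K) (Fin K) ℝ)
    (hA_nonneg : ∀ ℓ k, 0 ≤ A ℓ k) (hA_colsum : ∀ k, ∑ ℓ, A ℓ k = 1)
    (u v : Fin K → ℝ) (hu : ∀ k, 0 ≤ u k) (hv : ∀ k, 0 ≤ v k)
    (hg : ∀ k, v k = 0 → u k = 0) :
    klR (A.mulVec u) (A.mulVec v) ≤ klR u v := by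
  have hmv : ∀ (w : Fin K → ℝ) k, A.mulVec w k = ∑ ℓ, A k ℓ * w ℓ := by
    intro w k; simp [Matrix.mulVec, dotProduct]
  calc klR (A.mulVec u) (A.mulVec v)
      ≤ ∑ k, ∑ ℓ, A k ℓ * (u ℓ * Real.log (u ℓ / v ℓ)) := by
        rw [klR]
        refine Finset.sum_le_sum fun k _ => ?_
        have h1 := logsum (fun ℓ => A k ℓ * u ℓ) (fun ℓ => A k ℓ * v ℓ)
          (fun ℓ => mul_nonneg (hA_nonneg k ℓ) (hu ℓ))
          (fun ℓ => mul_nonneg (hA_nonneg k ℓ) (hv ℓ))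
          (fun ℓ h => by
            rcases mul_eq_zero.1 h with h' | h'
            · simp [h']
            · simp [hg ℓ h'])
        rw [hmv, hmv]
        refine le_trans (le_of_eq ?_) (le_trans h1 (le_of_eq ?_))
        · rfl
        · rw [klR]
          refine Finset.sum_congr rfl fun ℓ _ => ?_
          rcases eq_or_ne (A k ℓ) 0 with h0 | h0
          · simp [h0]
          · rcases eq_or_ne (v ℓ) 0 with hv0 | hv0
            · simp [hg ℓ hv0]
            · rw [mul_div_mul_left _ _ h0]; ring
    _ = klR u v := by
        rw [Finset.sum_comm, klR]
        refine Finset.sum_congr rfl fun ℓ _ => ?_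
        rw [← Finset.sum_mul, hA_colsum ℓ, one_mul]

lemma klVecE_mulVec_le {K : ℕ} (A : Matrix (Fin K) (Fin K) ℝ)
    (hA_nonneg : ∀ ℓ k, 0 ≤ A ℓ k) (hA_colsum : ∀ k, ∑ ℓ, A ℓ k = 1)
    (u v : Fin K → ℝ) (hu : ∀ k, 0 ≤ u k) (hv : ∀ k, 0 ≤ v k) :
    klVecE (A.mulVec u) (A.mulVec v) ≤ klVecE u v := by
  by_cases hg : ∀ k, v k = 0 → u k = 0
  · have hg' : ∀ k, A.mulVec v k = 0 → A.mulVec u k = 0 := by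
      intro k h
      have hmv : ∀ (w : Fin K → ℝ), A.mulVec w k = ∑ ℓ, A k ℓ * w ℓ := by
        intro w; simp [Matrix.mulVec, dotProduct]
      rw [hmv] at h ⊢
      have hz := (Finset.sum_eq_zero_iff_of_nonneg
        (fun ℓ _ => mul_nonneg (hA_nonneg k ℓ) (hv ℓ))).1 h
      refine Finset.sum_eq_zero fun ℓ _ => ?_
      rcases eq_or_ne (A k ℓ) 0 with h0 | h0
      · simp [h0]
      · have : v ℓ = 0 := by
          have := hz ℓ (Finset.mem_univ ℓ)
          rcases mul_eq_zero.1 this with h' | h'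
          · exact absurd h' h0
          · exact h'
        simp [hg ℓ this]
    rw [klVecE, klVecE, if_pos hg, if_pos hg']
    exact ENNReal.ofReal_le_ofReal (klR_mulVec_le A hA_nonneg hA_colsum u v hu hv hg)
  · have : klVecE u v = ⊤ := by rw [klVecE, if_neg hg]
    rw [this]; exact le_top

lemma contractionCoeff_le_one {K : ℕ} (A : Matrix (Fin K) (Fin K) ℝ)
    (hA_nonneg : ∀ ℓ k, 0 ≤ A ℓ k) (hA_colsum : ∀ k, ∑ ℓ, A ℓ k = 1) :
    contractionCoeff A ≤ 1 := by
  rw [contractionCoeff]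
  refine iSup_le fun u => iSup_le fun v => iSup_le fun _ => ?_
  calc klVecE (A.mulVec u) (A.mulVec v) / klVecE (u : Fin K → ℝ) v
      ≤ klVecE (u : Fin K → ℝ) v / klVecE (u : Fin K → ℝ) v :=
        ENNReal.div_le_div_right
          (klVecE_mulVec_le A hA_nonneg hA_colsum u v u.2.1 v.2.1) _
    _ ≤ 1 := ENNReal.div_self_le_one

lemma jensen_log {K : ℕ} (p w : Fin K → ℝ) (hp : ∀ k, 0 ≤ p k) (hps : ∑ k, p k = 1)
    (hw : ∀ k, 0 < w k) :
    ∑ k, p k * Real.log (w k) ≤ Real.log (∑ k, p k * w k) := by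
  have h := (strictConcaveOn_log_Ioi.concaveOn).le_map_sum
    (t := Finset.univ) (w := p) (p := w) (fun k _ => hp k) hps (fun k _ => hw k)
  simpa [smul_eq_mul] using h

lemma mulVec_pos {K : ℕ} {A : Matrix (Fin K) (Fin K) ℝ}
    (hA_nonneg : ∀ ℓ k, 0 ≤ A ℓ k) (hA_rowsum : ∀ ℓ, ∑ k, A ℓ k = 1)
    {v : Fin K → ℝ} (hv : ∀ k, 0 < v k) (k : Fin K) : 0 < A.mulVec v k := by
  have hmv : A.mulVec v k = ∑ ℓ, A k ℓ * v ℓ := by simp [Matrix.mulVec, dotProduct]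
  rw [hmv]
  obtain ⟨ℓ0, hℓ0⟩ : ∃ ℓ, 0 < A k ℓ := by
    by_contra h
    push_neg at h
    have : ∑ ℓ, A k ℓ = 0 :=
      Finset.sum_eq_zero fun ℓ _ => le_antisymm (h ℓ) (hA_nonneg k ℓ)
    rw [hA_rowsum k] at this; norm_num at this
  exact Finset.sum_pos' (fun ℓ _ => mul_nonneg (hA_nonneg k ℓ) (hv ℓ).le)
    ⟨ℓ0, Finset.mem_univ ℓ0, mul_pos hℓ0 (hv ℓ0)⟩

lemma mulVec_ge {K : ℕ} {A : Matrix (Fin K) (Fin K) ℝ}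
    (hA_nonneg : ∀ ℓ k, 0 ≤ A ℓ k) (hA_rowsum : ∀ ℓ, ∑ k, A ℓ k = 1)
    {v : Fin K → ℝ} {t : ℝ} (hv : ∀ ℓ, t ≤ v ℓ) (k : Fin K) : t ≤ A.mulVec v k := by
  have hmv : A.mulVec v k = ∑ ℓ, A k ℓ * v ℓ := by simp [Matrix.mulVec, dotProduct]
  rw [hmv]
  calc t = ∑ ℓ, A k ℓ * t := by rw [← Finset.sum_mul, hA_rowsum k, one_mul]
  _ ≤ ∑ ℓ, A k ℓ * v ℓ :=
      Finset.sum_le_sum fun ℓ _ => mul_le_mul_of_nonneg_left (hv ℓ) (hA_nonneg k ℓ)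

lemma mulVec_le_sum {K : ℕ} {A : Matrix (Fin K) (Fin K) ℝ}
    (hA_nonneg : ∀ ℓ k, 0 ≤ A ℓ k) (hA_colsum : ∀ k, ∑ ℓ, A ℓ k = 1)
    {v : Fin K → ℝ} (hv : ∀ ℓ, 0 ≤ v ℓ) (k : Fin K) : A.mulVec v k ≤ ∑ ℓ, v ℓ := by
  have hmv : A.mulVec v k = ∑ ℓ, A k ℓ * v ℓ := by simp [Matrix.mulVec, dotProduct]
  rw [hmv]
  refine Finset.sum_le_sum fun ℓ _ => ?_
  have hle1 : A k ℓ ≤ 1 := by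
    calc A k ℓ ≤ ∑ k', A k' ℓ :=
          Finset.single_le_sum (fun k' _ => hA_nonneg k' ℓ) (Finset.mem_univ k)
    _ = 1 := hA_colsum ℓ
  nlinarith [hv ℓ, hA_nonneg k ℓ]

lemma sum_mulVec {K : ℕ} {A : Matrix (Fin K) (Fin K) ℝ}
    (hA_colsum : ∀ k, ∑ ℓ, A ℓ k = 1) (v : Fin K → ℝ) :
    ∑ k, A.mulVec v k = ∑ ℓ, v ℓ := by
  have hmv : ∀ k, A.mulVec v k = ∑ ℓ, A k ℓ * v ℓ := by
    intro k; simp [Matrix.mulVec, dotProduct]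
  simp_rw [hmv]
  rw [Finset.sum_comm]
  refine Finset.sum_congr rfl fun ℓ _ => ?_
  rw [← Finset.sum_mul, hA_colsum ℓ, one_mul]

lemma uniform_probVec {K : ℕ} (hK : 0 < K) : probVec (fun _ : Fin K => (K : ℝ)⁻¹) := by
  constructor
  · intro k; positivity
  · simp [Finset.sum_const, Finset.card_univ]
    field_simp

lemma mulVec_uniform {K : ℕ} {A : Matrix (Fin K) (Fin K) ℝ}
    (hA_rowsum : ∀ ℓ, ∑ k, A ℓ k = 1) :
    A.mulVec (fun _ => (K : ℝ)⁻¹) = fun _ => (K : ℝ)⁻¹ := by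
  funext k
  have hmv : A.mulVec (fun _ => (K:ℝ)⁻¹) k = ∑ ℓ, A k ℓ * (K:ℝ)⁻¹ := by
    simp [Matrix.mulVec, dotProduct]
  rw [hmv, ← Finset.sum_mul, hA_rowsum k, one_mul]

lemma contract_step {K : ℕ} (hK : 0 < K) (A : Matrix (Fin K) (Fin K) ℝ)
    (hA_nonneg : ∀ ℓ k, 0 ≤ A ℓ k) (hA_colsum : ∀ k, ∑ ℓ, A ℓ k = 1)
    (hA_rowsum : ∀ ℓ, ∑ k, A ℓ k = 1)
    (x : Fin K → ℝ) (hxpos : ∀ k, 0 < x k) (hxs : ∑ k, x k = 1) :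
    klR (fun _ => (K : ℝ)⁻¹) (A.mulVec x)
      ≤ (contractionCoeff A).toReal * klR (fun _ => (K : ℝ)⁻¹) x := by
  set π : Fin K → ℝ := fun _ => (K : ℝ)⁻¹ with hπ
  have hπprob := uniform_probVec (K := K) hK
  have hxprob : probVec x := ⟨fun k => (hxpos k).le, hxs⟩
  have hAx_pos : ∀ k, 0 < A.mulVec x k := mulVec_pos hA_nonneg hA_rowsum hxpos
  have hAx_sum : ∑ k, A.mulVec x k = 1 := by rw [sum_mulVec hA_colsum, hxs]
  have hb0 : 0 ≤ klR π x :=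
    klR_nonneg π x (fun k => hπprob.1 k) (fun k => (hxpos k).le) hπprob.2 hxs
      (fun k h => absurd h (hxpos k).ne')
  have hDPIr : klR π (A.mulVec x) ≤ klR π x := by
    have := klR_mulVec_le A hA_nonneg hA_colsum π x (fun k => hπprob.1 k)
      (fun k => (hxpos k).le) (fun k h => absurd h (hxpos k).ne')
    rwa [mulVec_uniform hA_rowsum] at this
  by_cases hne : π = x
  · rw [← hne, mulVec_uniform hA_rowsum]
    have : klR π π = 0 := by
      rw [klR]
      refine Finset.sum_eq_zero fun k _ => ?_
      rw [div_self (by positivity : (π k : ℝ) ≠ 0), Real.log_one, mul_zero]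
    rw [this]; simp
  · rcases eq_or_lt_of_le hb0 with hb | hb
    · have h1 : klR π (A.mulVec x) ≤ 0 := le_trans hDPIr hb.ge
      calc klR π (A.mulVec x) ≤ 0 := h1
      _ = (contractionCoeff A).toReal * klR π x := by rw [← hb, mul_zero]
    · -- use the supremum bound
      have hguard1 : ∀ k, x k = 0 → π k = 0 := fun k h => absurd h (hxpos k).ne'
      have hguard2 : ∀ k, A.mulVec x k = 0 → A.mulVec π k = 0 :=
        fun k h => absurd h (hAx_pos k).ne'
      have hkl1 : klVecE π x = ENNReal.ofReal (klR π x) := by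
        rw [klVecE, if_pos hguard1]; rfl
      have hkl2 : klVecE (A.mulVec π) (A.mulVec x)
          = ENNReal.ofReal (klR π (A.mulVec x)) := by
        rw [klVecE, if_pos hguard2, mulVec_uniform hA_rowsum]; rfl
      have hsup : klVecE (A.mulVec π) (A.mulVec x) / klVecE π x ≤ contractionCoeff A := by
        rw [contractionCoeff]
        refine le_iSup_of_le ⟨π, hπprob⟩ (le_iSup_of_le ⟨x, hxprob⟩ ?_)
        exact le_iSup_of_le hne le_rfl
      have hη1 : contractionCoeff A ≤ 1 := contractionCoeff_le_one A hA_nonneg hA_colsum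
      have hηtop : contractionCoeff A ≠ ⊤ := ne_top_of_le_ne_top ENNReal.one_ne_top hη1
      have hbne : ENNReal.ofReal (klR π x) ≠ 0 := by
        rw [ne_eq, ENNReal.ofReal_eq_zero]; exact not_le.2 hb
      have hmul : ENNReal.ofReal (klR π (A.mulVec x))
          ≤ contractionCoeff A * ENNReal.ofReal (klR π x) := by
        rw [hkl1, hkl2] at hsup
        exact (ENNReal.div_le_iff_le_mul (Or.inl hbne) (Or.inl ENNReal.ofReal_ne_top)).1 hsup
      have ha0 : 0 ≤ klR π (A.mulVec x) :=
        klR_nonneg π (A.mulVec x) (fun k => hπprob.1 k) (fun k => (hAx_pos k).le)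
          hπprob.2 hAx_sum (fun k h => absurd h (hAx_pos k).ne')
      have := ENNReal.toReal_mono
        (ENNReal.mul_ne_top hηtop ENNReal.ofReal_ne_top) hmul
      rwa [ENNReal.toReal_ofReal ha0, ENNReal.toReal_mul, ENNReal.toReal_ofReal hb0] at this

noncomputable def yv {K : ℕ} (A : Matrix (Fin K) (Fin K) ℝ) (r : ℕ → Fin K → ℝ) :
    ℕ → Fin K → ℝ
  | 0 => fun _ => (K : ℝ)⁻¹
  | j+1 => fun k => r (j+1) k * A.mulVec (yv A r j) k

noncomputable def yfin {K : ℕ} (A : Matrix (Fin K) (Fin K) ℝ) :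
    (j : ℕ) → (Fin j → Fin K → ℝ) → Fin K → ℝ
  | 0, _ => fun _ => (K : ℝ)⁻¹
  | j+1, g => fun k => g (Fin.last j) k * A.mulVec (yfin A j (fun i => g i.castSucc)) k

lemma yv_eq_yfin {K : ℕ} (A : Matrix (Fin K) (Fin K) ℝ) (r : ℕ → Fin K → ℝ) :
    ∀ j, yv A r j = yfin A j (fun i : Fin j => r (i + 1)) := by
  intro j
  induction j with
  | zero => rfl
  | succ j ih =>
    show yv A r (j+1) = yfin A (j+1) _
    rw [yfin]
    funext k
    rw [yv]
    show r (j+1) k * (A.mulVec (yv A r j)) k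
      = r ((Fin.last j : ℕ) + 1) k * (A.mulVec (yfin A j fun i : Fin j => r ((i.castSucc : ℕ) + 1))) k
    have h2 : (fun i : Fin j => r ((i.castSucc : ℕ) + 1)) = fun i : Fin j => r (i + 1) := by
      funext i; simp [Fin.coe_castSucc]
    rw [Fin.val_last, h2, ih]

lemma Ymat_zero {K : ℕ} (A : Matrix (Fin K) (Fin K) ℝ) (r : ℕ → Fin K → ℝ) :
    Ymat A r 0 = 1 := by simp [Ymat]

lemma Ymat_succ {K : ℕ} (A : Matrix (Fin K) (Fin K) ℝ) (r : ℕ → Fin K → ℝ) (j : ℕ) :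
    Ymat A r (j+1) = Ymat A r j * (Aᵀ * Matrix.diagonal (r (j+1))) := by
  rw [Ymat, Ymat, List.range_succ, List.map_append, List.prod_append]
  simp

lemma Ymat_nonneg {K : ℕ} (A : Matrix (Fin K) (Fin K) ℝ) (r : ℕ → Fin K → ℝ)
    (hA : ∀ ℓ k, 0 ≤ A ℓ k) (hr : ∀ i k, 0 ≤ r (i+1) k) :
    ∀ i ℓ k, 0 ≤ Ymat A r i ℓ k := by
  intro i
  induction i with
  | zero =>
    intro ℓ k
    rw [Ymat_zero, Matrix.one_apply]
    split <;> norm_num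
  | succ j ih =>
    intro ℓ k
    rw [Ymat_succ, Matrix.mul_apply]
    refine Finset.sum_nonneg fun m _ => mul_nonneg (ih ℓ m) ?_
    rw [Matrix.mul_diagonal, Matrix.transpose_apply]
    exact mul_nonneg (hA k m) (hr j k)

lemma yv_eq_Ymat {K : ℕ} (A : Matrix (Fin K) (Fin K) ℝ) (r : ℕ → Fin K → ℝ) :
    ∀ j k, yv A r j k = ∑ ℓ, (K : ℝ)⁻¹ * Ymat A r j ℓ k := by
  intro j
  induction j with
  | zero =>
    intro k
    rw [Ymat_zero, yv]
    simp [Matrix.one_apply]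
  | succ j ih =>
    intro k
    show r (j+1) k * (A.mulVec (yv A r j)) k = _
    have hmv : A.mulVec (yv A r j) k = ∑ m, A k m * yv A r j m := by
      simp [Matrix.mulVec, dotProduct]
    rw [hmv]
    have : ∀ ℓ, Ymat A r (j+1) ℓ k = ∑ m, Ymat A r j ℓ m * (A k m * r (j+1) k) := by
      intro ℓ
      rw [Ymat_succ, Matrix.mul_apply]
      refine Finset.sum_congr rfl fun m _ => ?_
      rw [Matrix.mul_diagonal, Matrix.transpose_apply]
    calc r (j+1) k * ∑ m, A k m * yv A r j m
        = ∑ m, ∑ ℓ, r (j+1) k * (A k m * ((K:ℝ)⁻¹ * Ymat A r j ℓ m)) := by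
          rw [Finset.mul_sum]
          refine Finset.sum_congr rfl fun m _ => ?_
          rw [ih m, Finset.mul_sum, Finset.mul_sum]
      _ = ∑ ℓ, ∑ m, r (j+1) k * (A k m * ((K:ℝ)⁻¹ * Ymat A r j ℓ m)) := Finset.sum_comm
      _ = ∑ ℓ, (K:ℝ)⁻¹ * Ymat A r (j+1) ℓ k := by
          refine Finset.sum_congr rfl fun ℓ _ => ?_
          rw [this ℓ, Finset.mul_sum]
          refine Finset.sum_congr rfl fun m _ => ?_
          ring

lemma measurable_yfin {K : ℕ} (A : Matrix (Fin K) (Fin K) ℝ) :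
    ∀ j k, Measurable (fun g : Fin j → Fin K → ℝ => yfin A j g k) := by
  intro j
  induction j with
  | zero => intro k; exact measurable_const
  | succ j ih =>
    intro k
    have h1 : Measurable (fun g : Fin (j+1) → Fin K → ℝ => g (Fin.last j) k) :=
      (measurable_pi_apply k).comp (measurable_pi_apply (Fin.last j))
    have hres : Measurable (fun g : Fin (j+1) → Fin K → ℝ => (fun i : Fin j => g i.castSucc)) :=
      measurable_pi_lambda _ fun i => measurable_pi_apply _
    have h2 : Measurable
        (fun g : Fin (j+1) → Fin K → ℝ => A.mulVec (yfin A j (fun i => g i.castSucc)) k) := by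
      have hmv : (fun g : Fin (j+1) → Fin K → ℝ =>
          A.mulVec (yfin A j (fun i => g i.castSucc)) k)
          = fun g => ∑ ℓ, A k ℓ * yfin A j (fun i => g i.castSucc) ℓ := by
        funext g; simp [Matrix.mulVec, dotProduct]
      rw [hmv]
      exact Finset.measurable_sum _ fun ℓ _ =>
        (measurable_const.mul ((ih ℓ).comp hres))
    exact (h1.mul h2)

lemma yv_pos {K : ℕ} (hK : 0 < K) {A : Matrix (Fin K) (Fin K) ℝ}
    (hA_nonneg : ∀ ℓ k, 0 ≤ A ℓ k) (hA_rowsum : ∀ ℓ, ∑ k, A ℓ k = 1)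
    {r : ℕ → Fin K → ℝ} (hr : ∀ i k, 0 < r (i+1) k) :
    ∀ j k, 0 < yv A r j k := by
  intro j
  induction j with
  | zero => intro k; rw [yv]; positivity
  | succ j ih =>
    intro k
    rw [yv]
    exact mul_pos (hr j k) (mulVec_pos hA_nonneg hA_rowsum ih k)

lemma abs_log_sum_le {K : ℕ} (hK : 0 < K) (v : Fin K → ℝ) (hv : ∀ k, 0 < v k) :
    |Real.log (∑ k, v k)| ≤ (∑ k, |Real.log (v k)|) + Real.log K := by
  have hKpos : (0:ℝ) < (K:ℝ) := by exact_mod_cast hK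
  have huniv : (Finset.univ : Finset (Fin K)).Nonempty := by
    simp [Finset.univ_nonempty_iff]
    exact Fin.pos_iff_nonempty.1 hK
  have hS : 0 < ∑ k, v k := Finset.sum_pos (fun k _ => hv k) huniv
  obtain ⟨k0, _⟩ := huniv
  have hlogK : 0 ≤ Real.log K := Real.log_nonneg (by exact_mod_cast hK)
  have htnn : 0 ≤ ∑ k, |Real.log (v k)| := Finset.sum_nonneg fun k _ => abs_nonneg _
  rw [abs_le]
  constructor
  · have h1 : v k0 ≤ ∑ k, v k :=
      Finset.single_le_sum (fun k _ => (hv k).le) (Finset.mem_univ k0)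
    have h2 : Real.log (v k0) ≤ Real.log (∑ k, v k) := Real.log_le_log (hv k0) h1
    have h3 : |Real.log (v k0)| ≤ ∑ k, |Real.log (v k)| :=
      Finset.single_le_sum (f := fun k => |Real.log (v k)|)
        (fun k _ => abs_nonneg _) (Finset.mem_univ k0)
    have := neg_abs_le (Real.log (v k0))
    linarith
  · have hub : ∑ k, v k ≤ (K:ℝ) * Real.exp (∑ k, |Real.log (v k)|) := by
      calc ∑ k, v k ≤ ∑ _k : Fin K, Real.exp (∑ k, |Real.log (v k)|) := by
            refine Finset.sum_le_sum fun k _ => ?_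
            calc v k = Real.exp (Real.log (v k)) := (Real.exp_log (hv k)).symm
            _ ≤ Real.exp (∑ k', |Real.log (v k')|) := by
                refine Real.exp_le_exp.2 ?_
                have h3 : |Real.log (v k)| ≤ ∑ k', |Real.log (v k')| :=
                  Finset.single_le_sum (f := fun k' => |Real.log (v k')|)
                    (fun k' _ => abs_nonneg _) (Finset.mem_univ k)
                have := le_abs_self (Real.log (v k))
                linarith
      _ = (K:ℝ) * Real.exp (∑ k, |Real.log (v k)|) := by
          simp [Finset.sum_const, Finset.card_univ, nsmul_eq_mul]
    calc Real.log (∑ k, v k)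
        ≤ Real.log ((K:ℝ) * Real.exp (∑ k, |Real.log (v k)|)) := Real.log_le_log hS hub
    _ = Real.log K + ∑ k, |Real.log (v k)| := by
        rw [Real.log_mul hKpos.ne' (Real.exp_pos _).ne', Real.log_exp]
    _ = (∑ k, |Real.log (v k)|) + Real.log K := by ring

section Trajectory
set_option linter.unusedSectionVars false

variable {K : ℕ} (A : Matrix (Fin K) (Fin K) ℝ) (r : ℕ → Fin K → ℝ)

noncomputable def σv (j : ℕ) : ℝ := ∑ k, yv A r j k
noncomputable def xv (j : ℕ) (k : Fin K) : ℝ := yv A r j k / σv A r j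
noncomputable def wv (j : ℕ) : Fin K → ℝ := A.mulVec (xv A r j)
noncomputable def cv (j : ℕ) : ℝ := ∑ k, r (j+1) k * wv A r j k
noncomputable def tb (i : ℕ) : ℝ := ∑ k, |Real.log (r i k)|
noncomputable def bnd (j : ℕ) : ℝ :=
  Real.log K + ∑ j' ∈ Finset.range j, (2 * tb r (j'+1) + Real.log K)

variable {A r}
variable (hK : 0 < K) (hA_nonneg : ∀ ℓ k, 0 ≤ A ℓ k)
  (hA_colsum : ∀ k, ∑ ℓ, A ℓ k = 1) (hA_rowsum : ∀ ℓ, ∑ k, A ℓ k = 1)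
  (hr : ∀ i k, 0 < r (i+1) k)

include hK hA_nonneg hA_rowsum hr

lemma σv_pos : ∀ j, 0 < σv A r j := by
  intro j
  have : (Finset.univ : Finset (Fin K)).Nonempty := by
    simp [Finset.univ_nonempty_iff]
    exact Fin.pos_iff_nonempty.1 hK
  exact Finset.sum_pos (fun k _ => yv_pos hK hA_nonneg hA_rowsum hr j k) this

lemma xv_pos : ∀ j k, 0 < xv A r j k := fun j k =>
  div_pos (yv_pos hK hA_nonneg hA_rowsum hr j k) (σv_pos hK hA_nonneg hA_rowsum hr j)

lemma xv_sum : ∀ j, ∑ k, xv A r j k = 1 := by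
  intro j
  have h := σv_pos hK hA_nonneg hA_rowsum hr j
  simp only [xv]
  rw [← Finset.sum_div, ← σv]
  exact div_self h.ne'

lemma xv_le_one : ∀ j k, xv A r j k ≤ 1 := by
  intro j k
  rw [xv, div_le_one (σv_pos hK hA_nonneg hA_rowsum hr j)]
  exact Finset.single_le_sum
    (fun k' _ => (yv_pos hK hA_nonneg hA_rowsum hr j k').le) (Finset.mem_univ k)

lemma wv_pos : ∀ j k, 0 < wv A r j k := fun j k =>
  mulVec_pos hA_nonneg hA_rowsum (xv_pos hK hA_nonneg hA_rowsum hr j) k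

include hA_colsum

lemma wv_le_one : ∀ j k, wv A r j k ≤ 1 := by
  intro j k
  have := mulVec_le_sum hA_nonneg hA_colsum
    (fun ℓ => (xv_pos hK hA_nonneg hA_rowsum hr j ℓ).le) (v := xv A r j) k
  rwa [xv_sum hK hA_nonneg hA_rowsum hr j] at this

omit hA_colsum

include hA_colsum in
lemma wv_sum : ∀ j, ∑ k, wv A r j k = 1 := by
  intro j
  show ∑ k, A.mulVec (xv A r j) k = 1
  rw [sum_mulVec hA_colsum, xv_sum hK hA_nonneg hA_rowsum hr j]

lemma σv_succ : ∀ j, σv A r (j+1) = cv A r j * σv A r j := by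
  intro j
  have hmv : ∀ (v : Fin K → ℝ) k, A.mulVec v k = ∑ ℓ, A k ℓ * v ℓ := by
    intro v k; simp [Matrix.mulVec, dotProduct]
  have hws : ∀ k, wv A r j k * σv A r j = A.mulVec (yv A r j) k := by
    intro k
    rw [wv, hmv, hmv, Finset.sum_mul]
    have hσ := (σv_pos hK hA_nonneg hA_rowsum hr j).ne'
    refine Finset.sum_congr rfl fun ℓ _ => ?_
    rw [xv, mul_assoc, div_mul_cancel₀ _ hσ]
  rw [σv, cv, Finset.sum_mul]
  refine Finset.sum_congr rfl fun k _ => ?_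
  rw [yv, mul_assoc, hws k]

lemma cv_pos : ∀ j, 0 < cv A r j := by
  intro j
  have h := σv_succ (A := A) (r := r) hK hA_nonneg hA_rowsum hr j
  have h1 := σv_pos hK hA_nonneg hA_rowsum hr (j+1)
  have h2 := σv_pos hK hA_nonneg hA_rowsum hr j
  nlinarith

lemma σv_zero : σv A r 0 = 1 := by
  rw [σv]
  have : ∀ k : Fin K, yv A r 0 k = (K : ℝ)⁻¹ := fun _ => rfl
  simp only [this, Finset.sum_const, Finset.card_univ, Fintype.card_fin, nsmul_eq_mul]
  field_simp

lemma log_σv_eq : ∀ i, Real.log (σv A r i) = ∑ j ∈ Finset.range i, Real.log (cv A r j) := by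
  intro i
  induction i with
  | zero => simp [σv_zero hK hA_nonneg hA_rowsum hr]
  | succ i ih =>
    rw [σv_succ hK hA_nonneg hA_rowsum hr i,
      Real.log_mul (cv_pos hK hA_nonneg hA_rowsum hr i).ne'
        (σv_pos hK hA_nonneg hA_rowsum hr i).ne',
      Finset.sum_range_succ, ih]
    ring

include hA_colsum

lemma cv_le_sum : ∀ j, cv A r j ≤ ∑ k, r (j+1) k := by
  intro j
  rw [cv]
  refine Finset.sum_le_sum fun k _ => ?_
  have h1 := wv_le_one hK hA_nonneg hA_colsum hA_rowsum hr j k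
  nlinarith [(hr j k).le, h1]

omit hA_colsum

lemma xv_succ : ∀ j k, xv A r (j+1) k = r (j+1) k * wv A r j k / cv A r j := by
  intro j k
  rw [xv, σv_succ hK hA_nonneg hA_rowsum hr j, yv]
  have hws : wv A r j k * σv A r j = A.mulVec (yv A r j) k := by
    have hmv : ∀ (v : Fin K → ℝ) k, A.mulVec v k = ∑ ℓ, A k ℓ * v ℓ := by
      intro v k; simp [Matrix.mulVec, dotProduct]
    have hσ := (σv_pos hK hA_nonneg hA_rowsum hr j).ne'
    rw [wv, hmv, hmv, Finset.sum_mul]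
    refine Finset.sum_congr rfl fun ℓ _ => ?_
    rw [xv, mul_assoc, div_mul_cancel₀ _ hσ]
  show r (j+1) k * (A.mulVec (yv A r j)) k / (cv A r j * σv A r j)
      = r (j+1) k * wv A r j k / cv A r j
  rw [← hws]
  have h2 := σv_pos hK hA_nonneg hA_rowsum hr j
  have h3 := cv_pos hK hA_nonneg hA_rowsum hr j
  field_simp

include hA_colsum in
lemma xv_lb : ∀ j k, Real.exp (-(bnd r j)) ≤ xv A r j k := by
  intro j
  induction j with
  | zero =>
    intro k
    have h0 : xv A r 0 k = (K:ℝ)⁻¹ := by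
      rw [xv, σv_zero hK hA_nonneg hA_rowsum hr]
      simp [yv]
    rw [h0, bnd]
    simp only [Finset.range_zero, Finset.sum_empty, add_zero]
    rw [Real.exp_neg, Real.exp_log (by positivity : (0:ℝ) < (K:ℝ))]
  | succ j ih =>
    intro k
    rw [xv_succ hK hA_nonneg hA_rowsum hr j k]
    have hwlb : Real.exp (-(bnd r j)) ≤ wv A r j k :=
      mulVec_ge hA_nonneg hA_rowsum ih k
    have hrlb : Real.exp (-(tb r (j+1))) ≤ r (j+1) k := by
      have h1 : -(tb r (j+1)) ≤ Real.log (r (j+1) k) := by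
        have : |Real.log (r (j+1) k)| ≤ tb r (j+1) :=
          Finset.single_le_sum (f := fun k' => |Real.log (r (j+1) k')|)
            (fun k' _ => abs_nonneg _) (Finset.mem_univ k)
        have := neg_abs_le (Real.log (r (j+1) k))
        linarith
      calc Real.exp (-(tb r (j+1))) ≤ Real.exp (Real.log (r (j+1) k)) :=
            Real.exp_le_exp.2 h1
      _ = r (j+1) k := Real.exp_log (hr j k)
    have hcub : cv A r j ≤ (K:ℝ) * Real.exp (tb r (j+1)) := by
      calc cv A r j ≤ ∑ k', r (j+1) k' :=
            cv_le_sum hK hA_nonneg hA_colsum hA_rowsum hr j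
      _ ≤ ∑ _k' : Fin K, Real.exp (tb r (j+1)) := by
          refine Finset.sum_le_sum fun k' _ => ?_
          calc r (j+1) k' = Real.exp (Real.log (r (j+1) k')) :=
                (Real.exp_log (hr j k')).symm
          _ ≤ Real.exp (tb r (j+1)) := by
              refine Real.exp_le_exp.2 ?_
              have : |Real.log (r (j+1) k')| ≤ tb r (j+1) :=
                Finset.single_le_sum (f := fun k'' => |Real.log (r (j+1) k'')|)
                  (fun k'' _ => abs_nonneg _) (Finset.mem_univ k')
              have := le_abs_self (Real.log (r (j+1) k'))
              linarith
      _ = (K:ℝ) * Real.exp (tb r (j+1)) := by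
          simp [Finset.sum_const, Finset.card_univ, nsmul_eq_mul]
    have hcpos := cv_pos hK hA_nonneg hA_rowsum hr j
    have hbnd_succ : bnd r (j+1) = bnd r j + (2 * tb r (j+1) + Real.log K) := by
      rw [bnd, bnd, Finset.sum_range_succ]; ring
    rw [hbnd_succ]
    have hKexp : (K:ℝ) = Real.exp (Real.log K) :=
      (Real.exp_log (by positivity : (0:ℝ) < (K:ℝ))).symm
    calc Real.exp (-(bnd r j + (2 * tb r (j+1) + Real.log K)))
        = Real.exp (-(tb r (j+1))) * Real.exp (-(bnd r j)) /
            ((K:ℝ) * Real.exp (tb r (j+1))) := by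
          rw [hKexp, ← Real.exp_add, ← Real.exp_add, ← Real.exp_sub]
          congr 1
          rw [Real.log_exp]
          ring
      _ ≤ r (j+1) k * wv A r j k / cv A r j := by
          have hnum : Real.exp (-(tb r (j+1))) * Real.exp (-(bnd r j))
              ≤ r (j+1) k * wv A r j k :=
            mul_le_mul hrlb hwlb (Real.exp_pos _).le (hr j k).le
          have hd : 0 < (K:ℝ) * Real.exp (tb r (j+1)) := by positivity
          exact div_le_div₀ (mul_nonneg (hr j k).le
            (wv_pos hK hA_nonneg hA_rowsum hr j k).le) hnum hcpos hcub

include hA_colsum in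
lemma wv_lb : ∀ j k, Real.exp (-(bnd r j)) ≤ wv A r j k := fun j k =>
  mulVec_ge hA_nonneg hA_rowsum (xv_lb hK hA_nonneg hA_colsum hA_rowsum hr j) k

omit hK hA_nonneg hA_rowsum hr in
lemma tb_nonneg (i : ℕ) : 0 ≤ tb r i := Finset.sum_nonneg fun k _ => abs_nonneg _

omit hA_nonneg hA_rowsum hr in
lemma logK_nonneg : 0 ≤ Real.log K := Real.log_nonneg (by exact_mod_cast hK)

omit hA_nonneg hA_rowsum hr in
lemma bnd_nonneg (j : ℕ) : 0 ≤ bnd r j := by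
  rw [bnd]
  have h1 := logK_nonneg (K := K) hK
  refine add_nonneg h1 (Finset.sum_nonneg fun j' _ => ?_)
  have := tb_nonneg (r := r) (j'+1)
  linarith

include hA_colsum in
lemma abs_log_xv_le : ∀ j k, |Real.log (xv A r j k)| ≤ bnd r j := by
  intro j k
  have h1 := xv_lb hK hA_nonneg hA_colsum hA_rowsum hr j k
  have h2 := xv_le_one hK hA_nonneg hA_rowsum hr j k
  have h3 := xv_pos hK hA_nonneg hA_rowsum hr j k
  rw [abs_le]
  constructor
  · calc -(bnd r j) = Real.log (Real.exp (-(bnd r j))) := (Real.log_exp _).symm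
    _ ≤ Real.log (xv A r j k) := Real.log_le_log (Real.exp_pos _) h1
  · calc Real.log (xv A r j k) ≤ Real.log 1 := Real.log_le_log h3 h2
    _ = 0 := Real.log_one
    _ ≤ bnd r j := bnd_nonneg hK j

include hA_colsum in
lemma abs_log_wv_le : ∀ j k, |Real.log (wv A r j k)| ≤ bnd r j := by
  intro j k
  have h1 := wv_lb hK hA_nonneg hA_colsum hA_rowsum hr j k
  have h2 := wv_le_one hK hA_nonneg hA_colsum hA_rowsum hr j k
  have h3 := wv_pos hK hA_nonneg hA_rowsum hr j k
  rw [abs_le]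
  constructor
  · calc -(bnd r j) = Real.log (Real.exp (-(bnd r j))) := (Real.log_exp _).symm
    _ ≤ Real.log (wv A r j k) := Real.log_le_log (Real.exp_pos _) h1
  · calc Real.log (wv A r j k) ≤ Real.log 1 := Real.log_le_log h3 h2
    _ = 0 := Real.log_one
    _ ≤ bnd r j := bnd_nonneg hK j

omit hA_nonneg hA_rowsum hr in
lemma abs_klR_le (z : Fin K → ℝ) (hz : ∀ k, 0 < z k) (b : ℝ)
    (hb : ∀ k, |Real.log (z k)| ≤ b) :
    |klR (fun _ => (K:ℝ)⁻¹) z| ≤ Real.log K + b := by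
  have hKpos : (0:ℝ) < (K:ℝ) := by exact_mod_cast hK
  have hterm : ∀ k, |(K:ℝ)⁻¹ * Real.log ((K:ℝ)⁻¹ / z k)| ≤ (K:ℝ)⁻¹ * (Real.log K + b) := by
    intro k
    rw [abs_mul, abs_of_nonneg (by positivity : (0:ℝ) ≤ (K:ℝ)⁻¹)]
    refine mul_le_mul_of_nonneg_left ?_ (by positivity)
    rw [Real.log_div (by positivity) (hz k).ne', Real.log_inv]
    calc |-Real.log K - Real.log (z k)| ≤ |Real.log K| + |Real.log (z k)| := by
          have := abs_sub (-Real.log (K:ℝ)) (Real.log (z k))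
          simpa [abs_neg] using this
    _ ≤ Real.log K + b := by
        have h1 : |Real.log (K:ℝ)| = Real.log K := abs_of_nonneg (logK_nonneg hK)
        have := hb k
        linarith
  calc |klR (fun _ => (K:ℝ)⁻¹) z| ≤ ∑ k, |(K:ℝ)⁻¹ * Real.log ((K:ℝ)⁻¹ / z k)| :=
        Finset.abs_sum_le_sum_abs _ _
  _ ≤ ∑ _k : Fin K, (K:ℝ)⁻¹ * (Real.log K + b) := Finset.sum_le_sum fun k _ => hterm k
  _ = Real.log K + b := by
      rw [Finset.sum_const, Finset.card_univ, Fintype.card_fin, nsmul_eq_mul]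
      field_simp

lemma klR_xv_zero : klR (fun _ => (K:ℝ)⁻¹) (xv A r 0) = 0 := by
  have h0 : ∀ k, xv A r 0 k = (K:ℝ)⁻¹ := by
    intro k
    rw [xv, σv_zero hK hA_nonneg hA_rowsum hr]
    simp [yv]
  rw [klR]
  refine Finset.sum_eq_zero fun k _ => ?_
  rw [h0 k, div_self (by positivity : ((K:ℝ)⁻¹ : ℝ) ≠ 0), Real.log_one, mul_zero]

lemma klR_xv_nonneg : ∀ j, 0 ≤ klR (fun _ => (K:ℝ)⁻¹) (xv A r j) := by
  intro j
  refine klR_nonneg _ _ (fun k => by positivity) (fun k => (xv_pos hK hA_nonneg hA_rowsum hr j k).le)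
    (uniform_probVec hK).2 (xv_sum hK hA_nonneg hA_rowsum hr j)
    (fun k h => absurd h (xv_pos hK hA_nonneg hA_rowsum hr j k).ne')

include hA_colsum in
lemma klR_wv_nonneg : ∀ j, 0 ≤ klR (fun _ => (K:ℝ)⁻¹) (wv A r j) := by
  intro j
  refine klR_nonneg _ _ (fun k => by positivity) (fun k => (wv_pos hK hA_nonneg hA_rowsum hr j k).le)
    (uniform_probVec hK).2 (wv_sum hK hA_nonneg hA_colsum hA_rowsum hr j)
    (fun k h => absurd h (wv_pos hK hA_nonneg hA_rowsum hr j k).ne')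

include hA_colsum in
lemma klR_wv_le : ∀ j, klR (fun _ => (K:ℝ)⁻¹) (wv A r j)
    ≤ (contractionCoeff A).toReal * klR (fun _ => (K:ℝ)⁻¹) (xv A r j) := by
  intro j
  exact contract_step hK A hA_nonneg hA_colsum hA_rowsum (xv A r j)
    (xv_pos hK hA_nonneg hA_rowsum hr j) (xv_sum hK hA_nonneg hA_rowsum hr j)

lemma log_cv_identity : ∀ j, Real.log (cv A r j)
    = klR (fun _ => (K:ℝ)⁻¹) (xv A r (j+1)) - klR (fun _ => (K:ℝ)⁻¹) (wv A r j)
      + (K:ℝ)⁻¹ * ∑ k, Real.log (r (j+1) k) := by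
  intro j
  have hKpos : (0:ℝ) < (K:ℝ) := by exact_mod_cast hK
  have hcpos := cv_pos hK hA_nonneg hA_rowsum hr j
  have hterm : ∀ k, (K:ℝ)⁻¹ * Real.log ((K:ℝ)⁻¹ / xv A r (j+1) k)
      = (K:ℝ)⁻¹ * Real.log ((K:ℝ)⁻¹ / wv A r j k)
        - (K:ℝ)⁻¹ * Real.log (r (j+1) k) + (K:ℝ)⁻¹ * Real.log (cv A r j) := by
    intro k
    have hwpos := wv_pos hK hA_nonneg hA_rowsum hr j k
    have hrpos := hr j k
    rw [xv_succ hK hA_nonneg hA_rowsum hr j k]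
    rw [div_div_eq_mul_div, Real.log_div (by positivity) (by positivity),
      Real.log_mul (by positivity : ((K:ℝ)⁻¹ : ℝ) ≠ 0) hcpos.ne',
      Real.log_mul hrpos.ne' hwpos.ne',
      Real.log_div (by positivity : ((K:ℝ)⁻¹ : ℝ) ≠ 0) hwpos.ne']
    ring
  have hsum : klR (fun _ => (K:ℝ)⁻¹) (xv A r (j+1))
      = klR (fun _ => (K:ℝ)⁻¹) (wv A r j)
        - (K:ℝ)⁻¹ * ∑ k, Real.log (r (j+1) k) + Real.log (cv A r j) := by
    rw [klR, klR]
    calc ∑ k, (K:ℝ)⁻¹ * Real.log ((K:ℝ)⁻¹ / xv A r (j+1) k)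
        = ∑ k, ((K:ℝ)⁻¹ * Real.log ((K:ℝ)⁻¹ / wv A r j k)
            - (K:ℝ)⁻¹ * Real.log (r (j+1) k) + (K:ℝ)⁻¹ * Real.log (cv A r j)) :=
          Finset.sum_congr rfl fun k _ => hterm k
    _ = _ := by
        rw [Finset.sum_add_distrib, Finset.sum_sub_distrib, ← Finset.mul_sum,
          Finset.sum_const, Finset.card_univ, Fintype.card_fin, nsmul_eq_mul]
        have : (K:ℝ) * ((K:ℝ)⁻¹ * Real.log (cv A r j)) = Real.log (cv A r j) := by
          field_simp
        rw [this, ← Finset.mul_sum]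
  linarith [hsum]

include hA_colsum in
lemma log_cv_ge : ∀ j, Real.log (∑ m, r (j+1) m)
      + ∑ k, (r (j+1) k / ∑ m, r (j+1) m) * Real.log (wv A r j k)
    ≤ Real.log (cv A r j) := by
  intro j
  have huniv : (Finset.univ : Finset (Fin K)).Nonempty := by
    simp [Finset.univ_nonempty_iff]
    exact Fin.pos_iff_nonempty.1 hK
  have hS : 0 < ∑ m, r (j+1) m := Finset.sum_pos (fun m _ => hr j m) huniv
  set S := ∑ m, r (j+1) m with hSdef
  set p : Fin K → ℝ := fun k => r (j+1) k / S with hp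
  have hpnn : ∀ k, 0 ≤ p k := fun k => div_nonneg (hr j k).le hS.le
  have hps : ∑ k, p k = 1 := by
    rw [hp, ← Finset.sum_div, ← hSdef, div_self hS.ne']
  have hcv_eq : cv A r j = S * ∑ k, p k * wv A r j k := by
    rw [cv, Finset.mul_sum]
    refine Finset.sum_congr rfl fun k _ => ?_
    rw [hp]
    field_simp
  have hjen := jensen_log p (wv A r j) hpnn hps (wv_pos hK hA_nonneg hA_rowsum hr j)
  have hsumpw : 0 < ∑ k, p k * wv A r j k := by
    have := cv_pos hK hA_nonneg hA_rowsum hr j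
    nlinarith [hcv_eq]
  rw [hcv_eq, Real.log_mul hS.ne' hsumpw.ne']
  linarith

include hA_colsum in
lemma cv_lb : ∀ j, Real.exp (-(tb r (j+1))) ≤ cv A r j := by
  intro j
  have hrlb : ∀ k, Real.exp (-(tb r (j+1))) ≤ r (j+1) k := by
    intro k
    have h1 : -(tb r (j+1)) ≤ Real.log (r (j+1) k) := by
      have h2 : |Real.log (r (j+1) k)| ≤ tb r (j+1) :=
        Finset.single_le_sum (f := fun k' => |Real.log (r (j+1) k')|)
          (fun k' _ => abs_nonneg _) (Finset.mem_univ k)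
      have := neg_abs_le (Real.log (r (j+1) k))
      linarith
    calc Real.exp (-(tb r (j+1))) ≤ Real.exp (Real.log (r (j+1) k)) := Real.exp_le_exp.2 h1
    _ = r (j+1) k := Real.exp_log (hr j k)
  calc Real.exp (-(tb r (j+1))) = Real.exp (-(tb r (j+1))) * ∑ k, wv A r j k := by
        rw [wv_sum hK hA_nonneg hA_colsum hA_rowsum hr j, mul_one]
  _ = ∑ k, Real.exp (-(tb r (j+1))) * wv A r j k := by rw [Finset.mul_sum]
  _ ≤ ∑ k, r (j+1) k * wv A r j k := Finset.sum_le_sum fun k _ =>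
      mul_le_mul_of_nonneg_right (hrlb k) (wv_pos hK hA_nonneg hA_rowsum hr j k).le
  _ = cv A r j := rfl

include hA_colsum in
lemma abs_log_cv_le : ∀ j, |Real.log (cv A r j)| ≤ tb r (j+1) + Real.log K := by
  intro j
  have h1 := cv_lb hK hA_nonneg hA_colsum hA_rowsum hr j
  have h2 := cv_le_sum hK hA_nonneg hA_colsum hA_rowsum hr j
  have hcpos := cv_pos hK hA_nonneg hA_rowsum hr j
  have hub : ∑ k, r (j+1) k ≤ (K:ℝ) * Real.exp (tb r (j+1)) := by
    calc ∑ k, r (j+1) k ≤ ∑ _k : Fin K, Real.exp (tb r (j+1)) := by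
          refine Finset.sum_le_sum fun k _ => ?_
          calc r (j+1) k = Real.exp (Real.log (r (j+1) k)) := (Real.exp_log (hr j k)).symm
          _ ≤ Real.exp (tb r (j+1)) := by
              refine Real.exp_le_exp.2 ?_
              have h3 : |Real.log (r (j+1) k)| ≤ tb r (j+1) :=
                Finset.single_le_sum (f := fun k' => |Real.log (r (j+1) k')|)
                  (fun k' _ => abs_nonneg _) (Finset.mem_univ k)
              have := le_abs_self (Real.log (r (j+1) k))
              linarith
    _ = (K:ℝ) * Real.exp (tb r (j+1)) := by
        simp [Finset.sum_const, Finset.card_univ, nsmul_eq_mul]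
  rw [abs_le]
  have hKpos : (0:ℝ) < (K:ℝ) := by exact_mod_cast hK
  constructor
  · have hlk := logK_nonneg (K := K) hK
    calc -(tb r (j+1) + Real.log K) ≤ -(tb r (j+1)) := by linarith
    _ = Real.log (Real.exp (-(tb r (j+1)))) := (Real.log_exp _).symm
    _ ≤ Real.log (cv A r j) := Real.log_le_log (Real.exp_pos _) h1
  · calc Real.log (cv A r j) ≤ Real.log ((K:ℝ) * Real.exp (tb r (j+1))) :=
        Real.log_le_log hcpos (le_trans h2 hub)
    _ = Real.log K + tb r (j+1) := by
        rw [Real.log_mul hKpos.ne' (Real.exp_pos _).ne', Real.log_exp]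
    _ = tb r (j+1) + Real.log K := by ring

end Trajectory

/-- **Lower bound under exchangeable networks.** If the diagonal entries of `R_1` are
exchangeable and `A` is doubly stochastic and primitive, then
`ρ^AA ≤ η_A ρ^GA − (1 − η_A) E[log((1/K) Σ_k r_{k,1})]` and consequently
`ρ^GA − ρ^AA ≥ (1 − η_A) E[log((1/K) Σ_k r_{k,1}) − (1/K) Σ_k log r_{k,1}]`. -/
theorem lower_bound_exchangeable_networks
    {K : ℕ} (hK : 0 < K)
    (A : Matrix (Fin K) (Fin K) ℝ)
    (hA_nonneg : ∀ ℓ k, 0 ≤ A ℓ k)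
    (hA_colsum : ∀ k, ∑ ℓ, A ℓ k = 1)
    (hA_rowsum : ∀ ℓ, ∑ k, A ℓ k = 1)
    (hA_prim : ∃ n : ℕ, 1 ≤ n ∧ ∀ ℓ k, 0 < (A ^ n) ℓ k)
    {Ω : Type} [MeasureSpace Ω] [IsProbabilityMeasure (ℙ : Measure Ω)]
    (R : ℕ → Ω → Fin K → ℝ)
    (hmeas : ∀ i, Measurable (R i))
    (hindep : iIndepFun (fun i => R (i + 1)) ℙ)
    (hident : ∀ i : ℕ, IdentDistrib (R (i + 1)) (R 1) ℙ ℙ)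
    (hpos : ∀ i k, 1 ≤ i → ∀ᵐ ω, 0 < R i ω k)
    (hmean : ∀ i k, 1 ≤ i → ∫ ω, R i ω k = 1)
    (hint : ∀ i k, 1 ≤ i → Integrable (fun ω => R i ω k))
    (hlog : ∀ i k, 1 ≤ i → Integrable (fun ω => Real.log (R i ω k)))
    (hexch : ∀ σ : Equiv.Perm (Fin K), IdentDistrib (fun ω k => R 1 ω (σ k)) (R 1) ℙ ℙ)
    (γ : ℝ)
    (hγ : ∀ ℓ k : Fin K, ∀ᵐ ω, Tendsto
      (fun i : ℕ => (i : ℝ)⁻¹ * Real.log (Ymat A (fun j => R j ω) i ℓ k)) atTop (nhds γ)) :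
    (-γ ≤ (contractionCoeff A).toReal * (-(1 / K : ℝ) * ∑ k, ∫ ω, Real.log (R 1 ω k)) -
        (1 - (contractionCoeff A).toReal) *
          ∫ ω, Real.log ((1 / K : ℝ) * ∑ k, R 1 ω k)) ∧
    ((1 - (contractionCoeff A).toReal) *
        ∫ ω, (Real.log ((1 / K : ℝ) * ∑ k, R 1 ω k) - (1 / K : ℝ) * ∑ k, Real.log (R 1 ω k))
          ≤ (-(1 / K : ℝ) * ∑ k, ∫ ω, Real.log (R 1 ω k)) - (-γ)) := by
  classical
  have hKR : (0:ℝ) < (K:ℝ) := by exact_mod_cast hK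
  have hlogK0 : 0 ≤ Real.log K := Real.log_nonneg (by exact_mod_cast hK)
  set η : ℝ := (contractionCoeff A).toReal with hηdef
  have hη0 : 0 ≤ η := ENNReal.toReal_nonneg
  have hη1 : η ≤ 1 := by
    have h := contractionCoeff_le_one A hA_nonneg hA_colsum
    have h2 := ENNReal.toReal_mono ENNReal.one_ne_top h
    simpa using h2
  set S : ℝ := (K:ℝ)⁻¹ * ∑ k, ∫ ω, Real.log (R 1 ω k) with hSdef
  set L : ℝ := ∫ ω, Real.log ((K:ℝ)⁻¹ * ∑ k, R 1 ω k) with hLdef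
  set B : ℝ := (1 - η) * L + η * S with hBdef
  -- a.e. positivity of all the weights
  have hpos_all : ∀ᵐ ω, ∀ i k, 0 < R (i+1) ω k := by
    rw [MeasureTheory.ae_all_iff]
    intro i
    rw [MeasureTheory.ae_all_iff]
    intro k
    exact hpos (i+1) k (by omega)
  -- measurability
  have hmy : ∀ j k, Measurable fun ω => yv A (fun i => R i ω) j k := by
    intro j k
    have h1 : (fun ω => yv A (fun i => R i ω) j k)
        = fun ω => yfin A j (fun i : Fin j => R (i+1) ω) k := by
      funext ω; rw [yv_eq_yfin]
    rw [h1]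
    exact (measurable_yfin A j k).comp (measurable_pi_lambda _ fun i => hmeas (i+1))
  have hmσ : ∀ j, Measurable fun ω => σv A (fun i => R i ω) j := fun j =>
    Finset.measurable_sum _ fun k _ => hmy j k
  have hmx : ∀ j k, Measurable fun ω => xv A (fun i => R i ω) j k := fun j k =>
    (hmy j k).div (hmσ j)
  have hwv_eq : ∀ (r : ℕ → Fin K → ℝ) j k, wv A r j k = ∑ ℓ, A k ℓ * xv A r j ℓ := by
    intro r j k; simp [wv, Matrix.mulVec, dotProduct]
  have hmw : ∀ j k, Measurable fun ω => wv A (fun i => R i ω) j k := by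
    intro j k
    simp only [hwv_eq]
    exact Finset.measurable_sum _ fun ℓ _ => measurable_const.mul (hmx j ℓ)
  have hmc : ∀ j, Measurable fun ω => cv A (fun i => R i ω) j := by
    intro j
    refine Finset.measurable_sum _ fun k _ => ?_
    exact ((measurable_pi_apply k).comp (hmeas (j+1))).mul (hmw j k)
  have hmlogc : ∀ j, Measurable fun ω => Real.log (cv A (fun i => R i ω) j) := fun j =>
    Real.measurable_log.comp (hmc j)
  have hmklx : ∀ j, Measurable fun ω => klR (fun _ => (K:ℝ)⁻¹) (xv A (fun i => R i ω) j) := by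
    intro j
    refine Finset.measurable_sum _ fun k _ => ?_
    exact measurable_const.mul (Real.measurable_log.comp (measurable_const.div (hmx j k)))
  have hmklw : ∀ j, Measurable fun ω => klR (fun _ => (K:ℝ)⁻¹) (wv A (fun i => R i ω) j) := by
    intro j
    refine Finset.measurable_sum _ fun k _ => ?_
    exact measurable_const.mul (Real.measurable_log.comp (measurable_const.div (hmw j k)))
  -- integrability
  have hint_of_bound : ∀ (f g : Ω → ℝ), Measurable f → Integrable g →
      (∀ᵐ ω, |f ω| ≤ g ω) → Integrable f := by
    intro f g hf hg h
    refine hg.mono' hf.aestronglyMeasurable ?_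
    filter_upwards [h] with ω hω
    simpa [Real.norm_eq_abs] using hω
  have htb_int : ∀ j, Integrable fun ω => tb (fun i => R i ω) (j+1) := by
    intro j
    exact integrable_finset_sum _ fun k _ => (hlog (j+1) k (by omega)).abs
  have hbnd_int : ∀ j, Integrable fun ω => bnd (fun i => R i ω) j := by
    intro j
    refine (integrable_const _).add (integrable_finset_sum _ fun j' hj' => ?_)
    exact ((htb_int j').const_mul 2).add (integrable_const _)
  have hint_logx : ∀ j k, Integrable fun ω => Real.log (xv A (fun i => R i ω) j k) := by
    intro j k
    refine hint_of_bound _ _ (Real.measurable_log.comp (hmx j k)) (hbnd_int j) ?_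
    filter_upwards [hpos_all] with ω hω
    exact abs_log_xv_le hK hA_nonneg hA_colsum hA_rowsum hω j k
  have hint_logw : ∀ j k, Integrable fun ω => Real.log (wv A (fun i => R i ω) j k) := by
    intro j k
    refine hint_of_bound _ _ (Real.measurable_log.comp (hmw j k)) (hbnd_int j) ?_
    filter_upwards [hpos_all] with ω hω
    exact abs_log_wv_le hK hA_nonneg hA_colsum hA_rowsum hω j k
  have hint_logc : ∀ j, Integrable fun ω => Real.log (cv A (fun i => R i ω) j) := by
    intro j
    refine hint_of_bound _ _ (hmlogc j) ((htb_int j).add (integrable_const (Real.log K))) ?_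
    filter_upwards [hpos_all] with ω hω
    exact abs_log_cv_le hK hA_nonneg hA_colsum hA_rowsum hω j
  have hint_klx : ∀ j, Integrable fun ω => klR (fun _ => (K:ℝ)⁻¹) (xv A (fun i => R i ω) j) := by
    intro j
    refine hint_of_bound _ _ (hmklx j)
      ((integrable_const (Real.log K)).add (hbnd_int j)) ?_
    filter_upwards [hpos_all] with ω hω
    exact abs_klR_le hK _ (xv_pos hK hA_nonneg hA_rowsum hω j) _
      (abs_log_xv_le hK hA_nonneg hA_colsum hA_rowsum hω j)
  have hint_klw : ∀ j, Integrable fun ω => klR (fun _ => (K:ℝ)⁻¹) (wv A (fun i => R i ω) j) := by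
    intro j
    refine hint_of_bound _ _ (hmklw j)
      ((integrable_const (Real.log K)).add (hbnd_int j)) ?_
    filter_upwards [hpos_all] with ω hω
    exact abs_klR_le hK _ (wv_pos hK hA_nonneg hA_rowsum hω j) _
      (abs_log_wv_le hK hA_nonneg hA_colsum hA_rowsum hω j)

  have huniv : (Finset.univ : Finset (Fin K)).Nonempty := ⟨⟨0, hK⟩, Finset.mem_univ _⟩
  -- integrability of the normalized weights
  have hpfun_meas : ∀ k : Fin K, Measurable fun v : Fin K → ℝ => v k / ∑ m, v m := by
    intro k
    exact (measurable_pi_apply k).div (Finset.measurable_sum _ fun m _ => measurable_pi_apply m)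
  have hIp : ∀ j (k : Fin K), Integrable (fun ω => R (j+1) ω k / ∑ m, R (j+1) ω m) := by
    intro j k
    refine hint_of_bound _ _ ((hpfun_meas k).comp (hmeas (j+1))) (integrable_const 1) ?_
    filter_upwards [hpos_all] with ω hω
    have hS : 0 < ∑ m, R (j+1) ω m := Finset.sum_pos (fun m _ => hω j m) huniv
    rw [abs_of_nonneg (div_nonneg (hω j k).le hS.le), div_le_one hS]
    exact Finset.single_le_sum (fun m _ => (hω j m).le) (Finset.mem_univ k)
  -- exchangeability: each normalized weight has mean 1/K
  have hperm : ∀ (σp : Equiv.Perm (Fin K)) (k : Fin K),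
      ∫ ω, R 1 ω (σp k) / ∑ m, R 1 ω m = ∫ ω, R 1 ω k / ∑ m, R 1 ω m := by
    intro σp k
    have h1 := (hexch σp).comp (hpfun_meas k)
    have h2 := h1.integral_eq
    have h3 : ((fun v : Fin K → ℝ => v k / ∑ m, v m) ∘ (fun ω k' => R 1 ω (σp k')))
        = fun ω => R 1 ω (σp k) / ∑ m, R 1 ω m := by
      funext ω
      show R 1 ω (σp k) / ∑ m, R 1 ω (σp m) = R 1 ω (σp k) / ∑ m, R 1 ω m
      rw [Equiv.sum_comp σp (R 1 ω)]
    have h4 : ((fun v : Fin K → ℝ => v k / ∑ m, v m) ∘ R 1)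
        = fun ω => R 1 ω k / ∑ m, R 1 ω m := rfl
    rw [h3, h4] at h2
    exact h2
  have hsum_p : ∑ k, ∫ ω, R 1 ω k / ∑ m, R 1 ω m = 1 := by
    rw [← integral_finset_sum _ (fun k _ => hIp 0 k)]
    have hone : (fun ω => ∑ k, R 1 ω k / ∑ m, R 1 ω m) =ᵐ[ℙ] fun _ => (1:ℝ) := by
      filter_upwards [hpos_all] with ω hω
      have hS : 0 < ∑ m, R 1 ω m := Finset.sum_pos (fun m _ => hω 0 m) huniv
      rw [← Finset.sum_div, div_self hS.ne']
    rw [integral_congr_ae hone, integral_const]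
    simp
  have hpk1 : ∀ k : Fin K, ∫ ω, R 1 ω k / ∑ m, R 1 ω m = (K:ℝ)⁻¹ := by
    intro k
    have hconst : ∀ k', ∫ ω, R 1 ω k' / ∑ m, R 1 ω m = ∫ ω, R 1 ω k / ∑ m, R 1 ω m := by
      intro k'
      have h := hperm (Equiv.swap k' k) k
      rw [Equiv.swap_apply_right] at h
      exact h
    have hKsum : (K:ℝ) * ∫ ω, R 1 ω k / ∑ m, R 1 ω m = 1 := by
      rw [← hsum_p]
      rw [Finset.sum_congr rfl (fun k' _ => hconst k')]
      rw [Finset.sum_const, Finset.card_univ, Fintype.card_fin, nsmul_eq_mul]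
    field_simp at hKsum ⊢
    linarith
  have hpkj : ∀ j (k : Fin K), ∫ ω, R (j+1) ω k / ∑ m, R (j+1) ω m = (K:ℝ)⁻¹ := by
    intro j k
    rw [← hpk1 k]
    exact ((hident j).comp (hpfun_meas k)).integral_eq
  -- independence: expected product splits
  have hprod : ∀ j (k : Fin K),
      ∫ ω, (R (j+1) ω k / ∑ m, R (j+1) ω m) * Real.log (wv A (fun i => R i ω) j k)
        = (K:ℝ)⁻¹ * ∫ ω, Real.log (wv A (fun i => R i ω) j k) := by
    intro j k
    set X : Ω → ℝ := fun ω => R (j+1) ω k / ∑ m, R (j+1) ω m with hX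
    set Y : Ω → ℝ := fun ω => Real.log (wv A (fun i => R i ω) j k) with hY
    have hdisj : Disjoint ({j} : Finset ℕ) (Finset.range j) := by
      simp [Finset.disjoint_singleton_left]
    have hbase := hindep.indepFun_finset {j} (Finset.range j) hdisj (fun i => hmeas (i+1))
    have hjmem : j ∈ ({j} : Finset ℕ) := Finset.mem_singleton_self j
    set φ : (↥({j} : Finset ℕ) → Fin K → ℝ) → ℝ :=
      fun g => g ⟨j, hjmem⟩ k / ∑ m, g ⟨j, hjmem⟩ m with hφ
    set ψ : (↥(Finset.range j) → Fin K → ℝ) → ℝ :=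
      fun g => Real.log (∑ ℓ, A k ℓ *
        (yfin A j (fun i : Fin j => g ⟨(i:ℕ), Finset.mem_range.2 i.isLt⟩) ℓ /
          ∑ m', yfin A j (fun i : Fin j => g ⟨(i:ℕ), Finset.mem_range.2 i.isLt⟩) m')) with hψ
    have hφmeas : Measurable φ := by
      rw [hφ]; fun_prop
    have hres : Measurable fun g : (↥(Finset.range j) → Fin K → ℝ) =>
        (fun i : Fin j => g ⟨(i:ℕ), Finset.mem_range.2 i.isLt⟩) :=
      measurable_pi_lambda _ fun i => measurable_pi_apply _
    have hψmeas : Measurable ψ := by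
      refine Real.measurable_log.comp (Finset.measurable_sum _ fun ℓ _ => ?_)
      exact measurable_const.mul (((measurable_yfin A j ℓ).comp hres).div
        (Finset.measurable_sum _ fun m' _ => (measurable_yfin A j m').comp hres))
    have hcomp := hbase.comp hφmeas hψmeas
    have hXeq : X = φ ∘ (fun ω (i : ↥({j} : Finset ℕ)) => R ((i:ℕ)+1) ω) := rfl
    have hYeq : Y = ψ ∘ (fun ω (i : ↥(Finset.range j)) => R ((i:ℕ)+1) ω) := by
      funext ω
      show Real.log (wv A (fun i => R i ω) j k) = Real.log (∑ ℓ, A k ℓ *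
        (yfin A j (fun i : Fin j => R ((i:ℕ)+1) ω) ℓ /
          ∑ m', yfin A j (fun i : Fin j => R ((i:ℕ)+1) ω) m'))
      rw [hwv_eq]
      congr 1
      refine Finset.sum_congr rfl fun ℓ _ => ?_
      have hyfin := yv_eq_yfin A (fun i => R i ω) j
      rw [← hyfin]
      rfl
    have hIXY : IndepFun X Y ℙ := by rw [hXeq, hYeq]; exact hcomp
    have hkey := hIXY.integral_mul_eq_mul_integral (hIp j k).aestronglyMeasurable
      (hint_logw j k).aestronglyMeasurable
    have hXY : (fun ω => (R (j+1) ω k / ∑ m, R (j+1) ω m)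
        * Real.log (wv A (fun i => R i ω) j k)) = X * Y := rfl
    rw [hXY, hkey, hpkj j k]

  -- the constant m = E log(sum of weights)
  have hG : Measurable fun v : Fin K → ℝ => Real.log (∑ k, v k) :=
    Real.measurable_log.comp (Finset.measurable_sum _ fun k _ => measurable_pi_apply k)
  set m : ℝ := ∫ ω, Real.log (∑ k, R 1 ω k) with hmdef
  have hm_int : ∀ j, Integrable fun ω => Real.log (∑ k, R (j+1) ω k) := by
    intro j
    refine hint_of_bound _ _ (hG.comp (hmeas (j+1)))
      ((htb_int j).add (integrable_const (Real.log K))) ?_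
    filter_upwards [hpos_all] with ω hω
    exact abs_log_sum_le hK _ (hω j)
  have hm_eq : ∀ j, ∫ ω, Real.log (∑ k, R (j+1) ω k) = m := by
    intro j
    rw [hmdef]
    exact ((hident j).comp hG).integral_eq
  have hint_logmean : Integrable fun ω => Real.log ((K:ℝ)⁻¹ * ∑ k, R 1 ω k) := by
    refine hint_of_bound _ _ (Real.measurable_log.comp (measurable_const.mul
      (Finset.measurable_sum _ fun k _ => (measurable_pi_apply k).comp (hmeas 1))))
      ((htb_int 0).add (integrable_const (2 * Real.log K))) ?_
    filter_upwards [hpos_all] with ω hω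
    have hS0 : 0 < ∑ k, R 1 ω k := Finset.sum_pos (fun k _ => hω 0 k) huniv
    have h1 : Real.log ((K:ℝ)⁻¹ * ∑ k, R 1 ω k)
        = -Real.log K + Real.log (∑ k, R 1 ω k) := by
      rw [Real.log_mul (by positivity) hS0.ne', Real.log_inv]
    have h4 := abs_add_le (-Real.log (K:ℝ)) (Real.log (∑ k, R 1 ω k))
    rw [abs_neg, abs_of_nonneg hlogK0] at h4
    have h5 := abs_log_sum_le hK _ (fun k => hω 0 k)
    have hfin : |Real.log ((K:ℝ)⁻¹ * ∑ k, R 1 ω k)|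
        ≤ (∑ k, |Real.log (R 1 ω k)|) + 2 * Real.log K := by
      rw [h1]; linarith
    exact hfin
  have hm_L : m = Real.log K + L := by
    have hae : (fun ω => Real.log (∑ k, R 1 ω k)) =ᵐ[ℙ]
        fun ω => Real.log K + Real.log ((K:ℝ)⁻¹ * ∑ k, R 1 ω k) := by
      filter_upwards [hpos_all] with ω hω
      have hS0 : 0 < ∑ k, R 1 ω k := Finset.sum_pos (fun k _ => hω 0 k) huniv
      rw [Real.log_mul (by positivity) hS0.ne', Real.log_inv]
      ring
    rw [hmdef, integral_congr_ae hae,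
      integral_add (integrable_const _) hint_logmean, integral_const]
    simp [hLdef]
  -- E s_j = S
  have hs_int : ∀ j, Integrable fun ω => (K:ℝ)⁻¹ * ∑ k, Real.log (R (j+1) ω k) := fun j =>
    (integrable_finset_sum _ fun k _ => hlog (j+1) k (by omega)).const_mul _
  have hs_eq : ∀ j, ∫ ω, (K:ℝ)⁻¹ * ∑ k, Real.log (R (j+1) ω k) = S := by
    intro j
    rw [integral_const_mul, integral_finset_sum _ (fun k _ => hlog (j+1) k (by omega)), hSdef]
    congr 1
    refine Finset.sum_congr rfl fun k _ => ?_
    exact ((hident j).comp (Real.measurable_log.comp (measurable_pi_apply k))).integral_eq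
  -- per-step expected quantities
  have hD0 : ∫ ω, klR (fun _ => (K:ℝ)⁻¹) (xv A (fun i => R i ω) 0) = 0 := by
    refine integral_eq_zero_of_ae ?_
    filter_upwards [hpos_all] with ω hω
    exact klR_xv_zero hK hA_nonneg hA_rowsum hω
  have hDnn : ∀ j, 0 ≤ ∫ ω, klR (fun _ => (K:ℝ)⁻¹) (xv A (fun i => R i ω) j) := by
    intro j
    refine integral_nonneg_of_ae ?_
    filter_upwards [hpos_all] with ω hω
    exact klR_xv_nonneg hK hA_nonneg hA_rowsum hω j
  have hE_le : ∀ j, ∫ ω, klR (fun _ => (K:ℝ)⁻¹) (wv A (fun i => R i ω) j)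
      ≤ η * ∫ ω, klR (fun _ => (K:ℝ)⁻¹) (xv A (fun i => R i ω) j) := by
    intro j
    rw [← integral_const_mul]
    refine integral_mono_ae (hint_klw j) ((hint_klx j).const_mul η) ?_
    filter_upwards [hpos_all] with ω hω
    exact klR_wv_le hK hA_nonneg hA_colsum hA_rowsum hω j
  have hC_eq : ∀ j, ∫ ω, Real.log (cv A (fun i => R i ω) j)
      = (∫ ω, klR (fun _ => (K:ℝ)⁻¹) (xv A (fun i => R i ω) (j+1)))
        - (∫ ω, klR (fun _ => (K:ℝ)⁻¹) (wv A (fun i => R i ω) j)) + S := by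
    intro j
    have hae : (fun ω => Real.log (cv A (fun i => R i ω) j)) =ᵐ[ℙ]
        fun ω => klR (fun _ => (K:ℝ)⁻¹) (xv A (fun i => R i ω) (j+1))
          - klR (fun _ => (K:ℝ)⁻¹) (wv A (fun i => R i ω) j)
          + (K:ℝ)⁻¹ * ∑ k, Real.log (R (j+1) ω k) := by
      filter_upwards [hpos_all] with ω hω
      exact log_cv_identity hK hA_nonneg hA_rowsum hω j
    have hsub : Integrable (fun ω => klR (fun _ => (K:ℝ)⁻¹) (xv A (fun i => R i ω) (j+1))
        - klR (fun _ => (K:ℝ)⁻¹) (wv A (fun i => R i ω) j)) ℙ :=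
      (hint_klx (j+1)).sub (hint_klw j)
    rw [integral_congr_ae hae, integral_add hsub (hs_int j),
      integral_sub (hint_klx (j+1)) (hint_klw j), hs_eq j]
  have hEj_eq : ∀ j, ∫ ω, klR (fun _ => (K:ℝ)⁻¹) (wv A (fun i => R i ω) j)
      = -Real.log K - (K:ℝ)⁻¹ * ∑ k, ∫ ω, Real.log (wv A (fun i => R i ω) j k) := by
    intro j
    have h1 : (fun ω => klR (fun _ => (K:ℝ)⁻¹) (wv A (fun i => R i ω) j)) =ᵐ[ℙ]
        fun ω => ∑ k, (K:ℝ)⁻¹ * (-Real.log K - Real.log (wv A (fun i => R i ω) j k)) := by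
      filter_upwards [hpos_all] with ω hω
      rw [klR]
      refine Finset.sum_congr rfl fun k _ => ?_
      rw [Real.log_div (by positivity) (wv_pos hK hA_nonneg hA_rowsum hω j k).ne',
        Real.log_inv]
    have hint_k : ∀ k : Fin K, Integrable fun ω =>
        (K:ℝ)⁻¹ * (-Real.log K - Real.log (wv A (fun i => R i ω) j k)) := fun k =>
      (((integrable_const _).sub (hint_logw j k)).const_mul _)
    rw [integral_congr_ae h1, integral_finset_sum _ (fun k _ => hint_k k)]
    have h2 : ∀ k : Fin K, ∫ ω, (K:ℝ)⁻¹ * (-Real.log K - Real.log (wv A (fun i => R i ω) j k))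
        = (K:ℝ)⁻¹ * (-Real.log K - ∫ ω, Real.log (wv A (fun i => R i ω) j k)) := by
      intro k
      rw [integral_const_mul, integral_sub (integrable_const _) (hint_logw j k), integral_const]
      simp
    rw [Finset.sum_congr rfl fun k _ => h2 k]
    calc ∑ k, (K:ℝ)⁻¹ * (-Real.log K - ∫ ω, Real.log (wv A (fun i => R i ω) j k))
        = ∑ k, ((K:ℝ)⁻¹ * (-Real.log K)
            - (K:ℝ)⁻¹ * ∫ ω, Real.log (wv A (fun i => R i ω) j k)) :=
          Finset.sum_congr rfl fun k _ => by ring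
      _ = (∑ _k : Fin K, (K:ℝ)⁻¹ * (-Real.log K))
            - ∑ k, (K:ℝ)⁻¹ * ∫ ω, Real.log (wv A (fun i => R i ω) j k) :=
          Finset.sum_sub_distrib _ _
      _ = -Real.log K - (K:ℝ)⁻¹ * ∑ k, ∫ ω, Real.log (wv A (fun i => R i ω) j k) := by
          rw [Finset.sum_const, Finset.card_univ, Fintype.card_fin, nsmul_eq_mul,
            ← Finset.mul_sum]
          have hKK : (K:ℝ) * ((K:ℝ)⁻¹ * (-Real.log K)) = -Real.log K := by
            rw [← mul_assoc, mul_inv_cancel₀ hKR.ne', one_mul]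
          rw [hKK]
  have hC_ge : ∀ j, L - ∫ ω, klR (fun _ => (K:ℝ)⁻¹) (wv A (fun i => R i ω) j)
      ≤ ∫ ω, Real.log (cv A (fun i => R i ω) j) := by
    intro j
    have hint_k : ∀ k : Fin K, Integrable fun ω =>
        (R (j+1) ω k / ∑ m', R (j+1) ω m') * Real.log (wv A (fun i => R i ω) j k) := by
      intro k
      refine hint_of_bound _ _ (((hpfun_meas k).comp (hmeas (j+1))).mul
        (Real.measurable_log.comp (hmw j k))) (hbnd_int j) ?_
      filter_upwards [hpos_all] with ω hω
      have hS' : 0 < ∑ m', R (j+1) ω m' := Finset.sum_pos (fun m' _ => hω j m') huniv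
      have hp1 : |R (j+1) ω k / ∑ m', R (j+1) ω m'| ≤ 1 := by
        rw [abs_of_nonneg (div_nonneg (hω j k).le hS'.le), div_le_one hS']
        exact Finset.single_le_sum (fun m' _ => (hω j m').le) (Finset.mem_univ k)
      have hl := abs_log_wv_le (r := fun i => R i ω) hK hA_nonneg hA_colsum hA_rowsum hω j k
      rw [abs_mul]
      calc |R (j+1) ω k / ∑ m', R (j+1) ω m'| * |Real.log (wv A (fun i => R i ω) j k)|
          ≤ 1 * bnd (fun i => R i ω) j :=
            mul_le_mul hp1 hl (abs_nonneg _) zero_le_one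
        _ = bnd (fun i => R i ω) j := one_mul _
    have hpath : (fun ω => Real.log (∑ m', R (j+1) ω m')
        + ∑ k, (R (j+1) ω k / ∑ m', R (j+1) ω m') * Real.log (wv A (fun i => R i ω) j k))
        ≤ᵐ[ℙ] fun ω => Real.log (cv A (fun i => R i ω) j) := by
      filter_upwards [hpos_all] with ω hω
      exact log_cv_ge (r := fun i => R i ω) hK hA_nonneg hA_colsum hA_rowsum hω j
    have hint_lhs : Integrable (fun ω => Real.log (∑ m', R (j+1) ω m')
        + ∑ k, (R (j+1) ω k / ∑ m', R (j+1) ω m')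
            * Real.log (wv A (fun i => R i ω) j k)) ℙ :=
      (hm_int j).add (integrable_finset_sum Finset.univ fun k _ => hint_k k)
    have hI := integral_mono_ae hint_lhs (hint_logc j) hpath
    rw [integral_add (hm_int j) (integrable_finset_sum Finset.univ fun k _ => hint_k k),
      integral_finset_sum Finset.univ (fun k _ => hint_k k), hm_eq j,
      Finset.sum_congr rfl (fun k _ => hprod j k)] at hI
    have hrw : ∑ k, (K:ℝ)⁻¹ * ∫ ω, Real.log (wv A (fun i => R i ω) j k)
        = (K:ℝ)⁻¹ * ∑ k, ∫ ω, Real.log (wv A (fun i => R i ω) j k) := by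
      rw [← Finset.mul_sum]
    rw [hrw] at hI
    have hE := hEj_eq j
    have hL := hm_L
    linarith
  -- combined per-step bound
  have hstep : ∀ j, B + η * (∫ ω, klR (fun _ => (K:ℝ)⁻¹) (xv A (fun i => R i ω) (j+1)))
      - η * (∫ ω, klR (fun _ => (K:ℝ)⁻¹) (xv A (fun i => R i ω) j))
      ≤ ∫ ω, Real.log (cv A (fun i => R i ω) j) := by
    intro j
    have h1 := mul_le_mul_of_nonneg_left (hC_ge j) (by linarith : (0:ℝ) ≤ 1 - η)
    have h2 : η * ((∫ ω, klR (fun _ => (K:ℝ)⁻¹) (xv A (fun i => R i ω) (j+1)))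
        - (∫ ω, klR (fun _ => (K:ℝ)⁻¹) (wv A (fun i => R i ω) j)) + S)
        = η * ∫ ω, Real.log (cv A (fun i => R i ω) j) := by rw [← hC_eq j]
    have e1 : (1-η) * (L - ∫ ω, klR (fun _ => (K:ℝ)⁻¹) (wv A (fun i => R i ω) j))
        + η * ((∫ ω, klR (fun _ => (K:ℝ)⁻¹) (xv A (fun i => R i ω) (j+1)))
          - (∫ ω, klR (fun _ => (K:ℝ)⁻¹) (wv A (fun i => R i ω) j)) + S)
        = (1-η)*L + η*S + η * (∫ ω, klR (fun _ => (K:ℝ)⁻¹) (xv A (fun i => R i ω) (j+1)))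
          - (∫ ω, klR (fun _ => (K:ℝ)⁻¹) (wv A (fun i => R i ω) j)) := by ring
    have e2 : (1-η) * (∫ ω, Real.log (cv A (fun i => R i ω) j))
        + η * (∫ ω, Real.log (cv A (fun i => R i ω) j))
        = ∫ ω, Real.log (cv A (fun i => R i ω) j) := by ring
    have h3 := add_le_add h1 h2.le
    rw [e1, e2] at h3
    have h4 := hE_le j
    linarith [hBdef]
  -- telescoping
  have hT : ∀ i : ℕ, (i:ℝ) * B ≤ ∫ ω, Real.log (σv A (fun i' => R i' ω) i) := by
    intro i
    have hTi : ∫ ω, Real.log (σv A (fun i' => R i' ω) i)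
        = ∑ j ∈ Finset.range i, ∫ ω, Real.log (cv A (fun i' => R i' ω) j) := by
      rw [← integral_finset_sum _ (fun j _ => hint_logc j)]
      refine integral_congr_ae ?_
      filter_upwards [hpos_all] with ω hω
      exact log_σv_eq hK hA_nonneg hA_rowsum hω i
    rw [hTi]
    have h1 : ∑ j ∈ Finset.range i,
        (B + (η * (∫ ω, klR (fun _ => (K:ℝ)⁻¹) (xv A (fun i' => R i' ω) (j+1)))
          - η * (∫ ω, klR (fun _ => (K:ℝ)⁻¹) (xv A (fun i' => R i' ω) j))))
        ≤ ∑ j ∈ Finset.range i, ∫ ω, Real.log (cv A (fun i' => R i' ω) j) :=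
      Finset.sum_le_sum fun j _ => by linarith [hstep j]
    have h2 : ∑ j ∈ Finset.range i,
        (B + (η * (∫ ω, klR (fun _ => (K:ℝ)⁻¹) (xv A (fun i' => R i' ω) (j+1)))
          - η * (∫ ω, klR (fun _ => (K:ℝ)⁻¹) (xv A (fun i' => R i' ω) j))))
        = (i:ℝ) * B + (η * (∫ ω, klR (fun _ => (K:ℝ)⁻¹) (xv A (fun i' => R i' ω) i))
          - η * (∫ ω, klR (fun _ => (K:ℝ)⁻¹) (xv A (fun i' => R i' ω) 0))) := by
      rw [Finset.sum_add_distrib, Finset.sum_const, Finset.card_range, nsmul_eq_mul,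
        Finset.sum_range_sub (fun j => η * ∫ ω, klR (fun _ => (K:ℝ)⁻¹) (xv A (fun i' => R i' ω) j))]
    rw [h2] at h1
    have h5 : 0 ≤ η * ∫ ω, klR (fun _ => (K:ℝ)⁻¹) (xv A (fun i' => R i' ω) i) :=
      mul_nonneg hη0 (hDnn i)
    rw [hD0, mul_zero] at h1
    exact le_trans (by linarith [h5]) h1

  -- SLLN for the i.i.d. envelope X n = log of total mass at time n+1
  set X : ℕ → Ω → ℝ := fun n ω => Real.log (∑ k, R (n+1) ω k) with hXdef
  have hXident : ∀ n, IdentDistrib (X n) (X 0) ℙ ℙ := fun n =>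
    ((hident n).trans (hident 0).symm).comp hG
  have hXint0 : Integrable (X 0) := hm_int 0
  have hXindep : Pairwise (Function.onFun (IndepFun · · ℙ) X) := by
    intro a b hab
    exact (hindep.indepFun hab).comp hG hG

  have hSLLN := strong_law_ae_real X hXint0 hXindep hXident
  have hX0m : (ℙ[X 0]) = m := hm_eq 0
  rw [hX0m] at hSLLN
  have hγ' : ∀ᵐ ω, ∀ ℓ k : Fin K, Tendsto
      (fun i : ℕ => (i:ℝ)⁻¹ * Real.log (Ymat A (fun j => R j ω) i ℓ k)) atTop (nhds γ) := by
    rw [MeasureTheory.ae_all_iff]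
    intro ℓ
    rw [MeasureTheory.ae_all_iff]
    intro k
    exact hγ ℓ k
  have hint_logσ : ∀ i, Integrable fun ω => Real.log (σv A (fun i' => R i' ω) i) := by
    intro i
    refine (integrable_finset_sum (Finset.range i) (fun j _ => hint_logc j)).congr ?_
    filter_upwards [hpos_all] with ω hω
    exact (log_σv_eq hK hA_nonneg hA_rowsum hω i).symm
  -- B ≤ m
  have hSL : S ≤ L := by
    have h2 : S = ∫ ω, (K:ℝ)⁻¹ * ∑ k, Real.log (R 1 ω k) := (hs_eq 0).symm
    rw [h2, hLdef]
    refine integral_mono_ae (hs_int 0) hint_logmean ?_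
    filter_upwards [hpos_all] with ω hω
    have hj := jensen_log (fun _ => (K:ℝ)⁻¹) (R 1 ω) (fun k => by positivity)
      (uniform_probVec hK).2 (fun k => hω 0 k)
    have e1 : ∑ k, (K:ℝ)⁻¹ * Real.log (R 1 ω k) = (K:ℝ)⁻¹ * ∑ k, Real.log (R 1 ω k) := by
      rw [← Finset.mul_sum]
    have e2 : ∑ k, (K:ℝ)⁻¹ * R 1 ω k = (K:ℝ)⁻¹ * ∑ k, R 1 ω k := by
      rw [← Finset.mul_sum]
    rw [e1, e2] at hj
    exact hj
  have hBm : B ≤ m := by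
    have hLm : L ≤ m := by rw [hm_L]; linarith
    have hBL : B = L - η * (L - S) := by rw [hBdef]; ring
    have := mul_nonneg hη0 (sub_nonneg.2 hSL)
    linarith
  -- for every ε > 0, B ≤ γ + 3ε
  have hεbound : ∀ ε : ℝ, 0 < ε → B ≤ γ + 3*ε := by
    intro ε hε
    have hae_ev : ∀ᵐ ω, ∀ᶠ i : ℕ in atTop,
        m - γ - 3*ε ≤ (i:ℝ)⁻¹ * ((∑ j ∈ Finset.range i, X j ω)
          - Real.log (σv A (fun i' => R i' ω) i)) := by
      filter_upwards [hpos_all, hSLLN, hγ'] with ω hω hslln hγω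
      have hev1 : ∀ᶠ i : ℕ in atTop, m - ε ≤ (∑ j ∈ Finset.range i, X j ω) / i :=
        hslln.eventually (eventually_ge_nhds (by linarith : m - ε < m))
      have hev2 : ∀ᶠ i : ℕ in atTop, ∀ ℓ k : Fin K,
          (i:ℝ)⁻¹ * Real.log (Ymat A (fun j => R j ω) i ℓ k) < γ + ε := by
        rw [eventually_all]
        intro ℓ
        rw [eventually_all]
        intro k
        exact (hγω ℓ k).eventually_lt_const (by linarith)
      have hev3 : ∀ᶠ i : ℕ in atTop, Real.log K * (i:ℝ)⁻¹ ≤ ε := by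
        have h0 : Tendsto (fun i : ℕ => Real.log K * (i:ℝ)⁻¹) atTop (nhds 0) := by
          have := tendsto_inv_atTop_nhds_zero_nat.const_mul (Real.log (K:ℝ))
          simpa using this
        exact h0.eventually (eventually_le_nhds hε)
      filter_upwards [hev1, hev2, hev3, eventually_ge_atTop 1] with i h1 h2 h3 hi1
      have hipos : (0:ℝ) < (i:ℝ) := by exact_mod_cast hi1
      have hYb : ∀ ℓ k : Fin K, Ymat A (fun j => R j ω) i ℓ k ≤ Real.exp ((γ+ε)*i) := by
        intro ℓ k
        have hY0 : 0 ≤ Ymat A (fun j => R j ω) i ℓ k :=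
          Ymat_nonneg A _ hA_nonneg (fun i' k' => (hω i' k').le) i ℓ k
        rcases eq_or_lt_of_le hY0 with h0 | h0
        · rw [← h0]; positivity
        · have hlt := h2 ℓ k
          have hlog : Real.log (Ymat A (fun j => R j ω) i ℓ k) ≤ (γ+ε)*(i:ℝ) := by
            calc Real.log (Ymat A (fun j => R j ω) i ℓ k)
                = (i:ℝ) * ((i:ℝ)⁻¹ * Real.log (Ymat A (fun j => R j ω) i ℓ k)) := by
                  rw [← mul_assoc, mul_inv_cancel₀ hipos.ne', one_mul]
            _ ≤ (i:ℝ) * (γ+ε) := mul_le_mul_of_nonneg_left hlt.le hipos.le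
            _ = (γ+ε)*(i:ℝ) := by ring
          calc Ymat A (fun j => R j ω) i ℓ k
              = Real.exp (Real.log (Ymat A (fun j => R j ω) i ℓ k)) := (Real.exp_log h0).symm
          _ ≤ Real.exp ((γ+ε)*(i:ℝ)) := Real.exp_le_exp.2 hlog
      have hσb : σv A (fun i' => R i' ω) i ≤ (K:ℝ) * Real.exp ((γ+ε)*(i:ℝ)) := by
        calc σv A (fun i' => R i' ω) i
            = ∑ k, ∑ ℓ, (K:ℝ)⁻¹ * Ymat A (fun i' => R i' ω) i ℓ k := by
              rw [σv]
              exact Finset.sum_congr rfl fun k _ => yv_eq_Ymat A _ i k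
        _ ≤ ∑ _k : Fin K, ∑ _ℓ : Fin K, (K:ℝ)⁻¹ * Real.exp ((γ+ε)*(i:ℝ)) := by
            refine Finset.sum_le_sum fun k _ => Finset.sum_le_sum fun ℓ _ => ?_
            exact mul_le_mul_of_nonneg_left (hYb ℓ k) (by positivity)
        _ = (K:ℝ) * Real.exp ((γ+ε)*(i:ℝ)) := by
            rw [Finset.sum_const, Finset.sum_const, Finset.card_univ, Fintype.card_fin,
              nsmul_eq_mul, nsmul_eq_mul]
            field_simp
      have hσpos := σv_pos (r := fun i' => R i' ω) hK hA_nonneg hA_rowsum hω i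
      have hlogσb : Real.log (σv A (fun i' => R i' ω) i) ≤ Real.log K + (γ+ε)*(i:ℝ) := by
        calc Real.log (σv A (fun i' => R i' ω) i)
            ≤ Real.log ((K:ℝ) * Real.exp ((γ+ε)*(i:ℝ))) := Real.log_le_log hσpos hσb
        _ = Real.log K + (γ+ε)*(i:ℝ) := by
            rw [Real.log_mul hKR.ne' (Real.exp_pos _).ne', Real.log_exp]
      have hs1 : m - ε ≤ (∑ j ∈ Finset.range i, X j ω) * (i:ℝ)⁻¹ := by
        rw [← div_eq_mul_inv]
        exact h1
      have hexpand : (i:ℝ)⁻¹ * ((∑ j ∈ Finset.range i, X j ω)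
          - Real.log (σv A (fun i' => R i' ω) i))
          = (∑ j ∈ Finset.range i, X j ω) * (i:ℝ)⁻¹
            - Real.log (σv A (fun i' => R i' ω) i) * (i:ℝ)⁻¹ := by ring
      rw [hexpand]
      have hlog2 : Real.log (σv A (fun i' => R i' ω) i) * (i:ℝ)⁻¹
          ≤ Real.log K * (i:ℝ)⁻¹ + (γ+ε) := by
        calc Real.log (σv A (fun i' => R i' ω) i) * (i:ℝ)⁻¹
            ≤ (Real.log K + (γ+ε)*(i:ℝ)) * (i:ℝ)⁻¹ :=
              mul_le_mul_of_nonneg_right hlogσb (by positivity)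
        _ = Real.log K * (i:ℝ)⁻¹ + (γ+ε) * ((i:ℝ) * (i:ℝ)⁻¹) := by ring
        _ = Real.log K * (i:ℝ)⁻¹ + (γ+ε) := by rw [mul_inv_cancel₀ hipos.ne', mul_one]
      linarith
    -- Fatou argument
    set g : ℕ → Ω → ℝ := fun i ω => (i:ℝ)⁻¹ * ((∑ j ∈ Finset.range i, X j ω)
      - Real.log (σv A (fun i' => R i' ω) i)) with hgdef
    have hg_meas : ∀ i, Measurable (g i) := by
      intro i
      exact (((Finset.measurable_sum (Finset.range i) (fun j _ => hG.comp (hmeas (j+1)))).sub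
        (Real.measurable_log.comp (hmσ i))).const_mul _)
    have hg_int : ∀ i, Integrable (g i) := by
      intro i
      exact ((integrable_finset_sum (Finset.range i) (fun j _ => hm_int j)).sub
        (hint_logσ i)).const_mul _
    have hg_nonneg : ∀ i, 0 ≤ᵐ[ℙ] g i := by
      intro i
      filter_upwards [hpos_all] with ω hω
      have h1 : Real.log (σv A (fun i' => R i' ω) i) ≤ ∑ j ∈ Finset.range i, X j ω := by
        rw [log_σv_eq hK hA_nonneg hA_rowsum hω i]
        refine Finset.sum_le_sum fun j _ => ?_
        exact Real.log_le_log (cv_pos hK hA_nonneg hA_rowsum hω j)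
          (cv_le_sum hK hA_nonneg hA_colsum hA_rowsum hω j)
      have h2 : (0:ℝ) ≤ (i:ℝ)⁻¹ := by positivity
      have h3 := mul_nonneg h2 (by linarith :
        (0:ℝ) ≤ (∑ j ∈ Finset.range i, X j ω) - Real.log (σv A (fun i' => R i' ω) i))
      exact h3
    have hup2 : ∀ i : ℕ, 1 ≤ i → ∫ ω, g i ω ≤ m - B := by
      intro i hi
      have hipos : (0:ℝ) < (i:ℝ) := by exact_mod_cast hi
      have hInt : ∫ ω, g i ω = (i:ℝ)⁻¹ * ((∑ j ∈ Finset.range i, ∫ ω, X j ω)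
          - ∫ ω, Real.log (σv A (fun i' => R i' ω) i)) := by
        rw [hgdef]
        rw [integral_const_mul,
          integral_sub (integrable_finset_sum (Finset.range i) (fun j _ => hm_int j))
            (hint_logσ i),
          integral_finset_sum (Finset.range i) (fun j _ => hm_int j)]
      rw [hInt]
      have hXm : ∑ j ∈ Finset.range i, ∫ ω, X j ω = (i:ℝ) * m := by
        rw [Finset.sum_congr rfl (fun j _ => hm_eq j), Finset.sum_const, Finset.card_range,
          nsmul_eq_mul]
      rw [hXm]
      have hTlow := hT i
      calc (i:ℝ)⁻¹ * ((i:ℝ)*m - ∫ ω, Real.log (σv A (fun i' => R i' ω) i))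
          ≤ (i:ℝ)⁻¹ * ((i:ℝ)*m - (i:ℝ)*B) :=
            mul_le_mul_of_nonneg_left (by linarith) (by positivity)
      _ = m - B := by
          rw [← mul_sub]
          rw [← mul_assoc, inv_mul_cancel₀ hipos.ne', one_mul]
    have hofReal : ENNReal.ofReal (m - γ - 3*ε) ≤ ENNReal.ofReal (m - B) := by
      have hF := lintegral_liminf_le (μ := ℙ) (u := atTop)
        (fun i => ENNReal.measurable_ofReal.comp (hg_meas i))
      have hlow : ENNReal.ofReal (m - γ - 3*ε)
          ≤ ∫⁻ ω, Filter.atTop.liminf (fun i => ENNReal.ofReal (g i ω)) ∂ℙ := by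
        have hae2 : ∀ᵐ ω, ENNReal.ofReal (m - γ - 3*ε)
            ≤ Filter.atTop.liminf fun i => ENNReal.ofReal (g i ω) := by
          filter_upwards [hae_ev] with ω hω
          exact le_liminf_of_le (by isBoundedDefault)
            (hω.mono fun i hi => ENNReal.ofReal_le_ofReal hi)
        calc ENNReal.ofReal (m - γ - 3*ε)
            = ∫⁻ _ω, ENNReal.ofReal (m - γ - 3*ε) ∂ℙ := by
              rw [lintegral_const, measure_univ, mul_one]
        _ ≤ _ := lintegral_mono_ae hae2
      have hupl : Filter.atTop.liminf (fun i => ∫⁻ ω, ENNReal.ofReal (g i ω) ∂ℙ)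
          ≤ ENNReal.ofReal (m - B) := by
        refine liminf_le_of_frequently_le' ?_
        refine ((eventually_ge_atTop 1).mono ?_).frequently
        intro i hi
        rw [← ofReal_integral_eq_lintegral_ofReal (hg_int i) (hg_nonneg i)]
        exact ENNReal.ofReal_le_ofReal (hup2 i hi)
      exact le_trans hlow (le_trans hF hupl)
    have hreal : m - γ - 3*ε ≤ m - B := by
      by_cases hc : 0 ≤ m - γ - 3*ε
      · exact (ENNReal.ofReal_le_ofReal_iff (by linarith [hBm] : (0:ℝ) ≤ m - B)).1 hofReal
      · push_neg at hc
        linarith [hBm]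
    linarith
  have hγB : B ≤ γ := by
    by_contra hcon
    push_neg at hcon
    have := hεbound ((B - γ)/6) (by linarith)
    linarith
  -- final algebra
  have hdiff : ∫ ω, (Real.log ((K:ℝ)⁻¹ * ∑ k, R 1 ω k)
      - (K:ℝ)⁻¹ * ∑ k, Real.log (R 1 ω k)) = L - S := by
    rw [integral_sub hint_logmean (hs_int 0), ← hLdef]
    congr 1
    exact hs_eq 0
  constructor
  · simp only [one_div]
    rw [← hLdef]
    have hRS : η * (-(K:ℝ)⁻¹ * ∑ k, ∫ ω, Real.log (R 1 ω k)) - (1-η) * L = -B := by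
      rw [hBdef, hSdef]
      ring
    rw [hRS]
    linarith
  · simp only [one_div]
    rw [hdiff]
    have h2 : (1-η) * (L - S) = B - S := by rw [hBdef]; ring
    have h3 : -(K:ℝ)⁻¹ * ∑ k, ∫ ω, Real.log (R 1 ω k) = -S := by rw [hSdef]; ring
    rw [h2, h3]
    linarith
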